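/- arXiv:1507.04538 — 5 statements merged into one kernel-verified Lean document; each statement's English description precedes it below -/
import Mathlib

section
/- Let Z_n(P,Q) denote the polynomial counting lattice paths of length 2n with steps ±1, starting and ending at height 0 and staying nonnegative, where each down-step immediately following an up-step has weight Q and each down-step immediately following a down-step has weight P. Then the generating function Z(z) = Σ_{n≥0} Z_n z^n satisfies the quadratic equation z·P·Z(z)^2 - (1 - z(Q-P))·Z(z) + 1 = 0. -/
open PowerSeries

/-- step value: `true` is an up-step `+1`, `false` a down-step `-1`. -/
def stepVal (b : Bool) : ℤ := if b then 1 else -1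

/-- total height change of a step sequence. -/
def pathSum (s : List Bool) : ℤ := (s.map stepVal).sum

/-- a Dyck-type path: total sum 0, all partial sums nonnegative. -/
def IsDyck (s : List Bool) : Prop :=
  pathSum s = 0 ∧ ∀ k ∈ Finset.range (s.length + 1), 0 ≤ pathSum (s.take k)

instance : DecidablePred IsDyck := fun s => by
  unfold IsDyck; infer_instance

/-- weight of a consecutive pair of steps: a down-step following an up-step has
weight `Q`, a down-step following a down-step has weight `P`, up-steps weight `1`. -/
def pairWeight {R : Type*} [CommRing R] (P Q : R) : Bool → Bool → R
  | _, true => 1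
  | true, false => Q
  | false, false => P

/-- weight of a path: product of the weights of its down-steps
(the first step of a Dyck path is never a down-step). -/
def pathWeight {R : Type*} [CommRing R] (P Q : R) (s : List Bool) : R :=
  ((s.zip s.tail).map (fun p => pairWeight P Q p.1 p.2)).prod

/-- `Z_n(P,Q)`: sum of weights over Dyck-type paths of length `2n`. -/
def Zn {R : Type*} [CommRing R] (P Q : R) (n : ℕ) : R :=
  ∑ f ∈ Finset.univ.filter (fun f : Fin (2 * n) → Bool => IsDyck (List.ofFn f)),
    pathWeight P Q (List.ofFn f)

/-!
Every nonempty path factors uniquely by its first return to height `0` as `U p D q` with `p, q`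
paths; here the paths are Mathlib's `DyckWord`s and the factorisation is
`insidePart`/`outsidePart`. The closing `D` follows an up-step exactly when `p` is empty, so it
weighs `Q` if `p = []` and `P` otherwise, while the first step of `q` is an up-step and
contributes nothing. Hence `Z_{n+1} = ∑_{i+j=n} c_i Z_i Z_j` with `c_0 = Q` and `c_i = P` for
`i > 0`, that is `Z = 1 + z (P Z + Q - P) Z`.
-/

open DyckStep

def DyckStep.equivBool : DyckStep ≃ Bool where
  toFun | U => true | D => false
  invFun | true => U | false => D
  left_inv s := by cases s <;> rfl
  right_inv b := by cases b <;> rfl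

@[simp] lemma DyckStep.equivBool_U : equivBool U = true := rfl
@[simp] lemma DyckStep.equivBool_D : equivBool D = false := rfl

namespace DyckWord

def toPath (p : DyckWord) : List Bool := p.toList.map equivBool

lemma toPath_injective : Function.Injective toPath := fun _ _ h =>
  DyckWord.ext (List.map_injective_iff.mpr equivBool.injective h)

@[simp]
lemma toPath_zero : toPath 0 = [] := rfl

lemma length_toPath (p : DyckWord) : p.toPath.length = 2 * p.semilength := by
  simp [toPath]

lemma toPath_nest_add (p q : DyckWord) :
    (p.nest + q).toPath = true :: p.toPath ++ false :: q.toPath := by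
  show ([U] ++ p.toList ++ [D] ++ q.toList).map equivBool = _
  simp [toPath]

lemma exists_toPath_eq_of_ne_zero {p : DyckWord} (h : p ≠ 0) :
    ∃ t, p.toPath = true :: t ++ [false] := by
  refine ⟨p.toList.dropLast.tail.map equivBool, ?_⟩
  conv_lhs => rw [toPath, ← cons_tail_dropLast_concat h]
  simp

lemma semilength_eq_zero_iff {p : DyckWord} : p.semilength = 0 ↔ p = 0 := by
  rw [← toList_eq_nil, ← List.length_eq_zero_iff, ← two_mul_semilength_eq_length]
  omega

end DyckWord

lemma pathSum_map_equivBool (l : List DyckStep) :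
    pathSum (l.map equivBool) = l.count U - l.count D := by
  induction l with
  | nil => simp [pathSum]
  | cons s l ih =>
    cases s <;> simp_all [pathSum, stepVal] <;> ring

lemma isDyck_iff_forall_take (s : List Bool) :
    IsDyck s ↔ pathSum s = 0 ∧ ∀ k, 0 ≤ pathSum (s.take k) := by
  refine ⟨fun ⟨h0, h⟩ => ⟨h0, fun k => ?_⟩, fun ⟨h0, h⟩ => ⟨h0, fun k _ => h k⟩⟩
  rcases le_or_gt k s.length with hk | hk
  · exact h k (Finset.mem_range.mpr (by omega))
  · rw [List.take_of_length_le hk.le]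
    exact h0.ge

lemma isDyck_map_equivBool_iff (l : List DyckStep) :
    IsDyck (l.map equivBool) ↔
      l.count U = l.count D ∧ ∀ k, (l.take k).count D ≤ (l.take k).count U := by
  simp only [isDyck_iff_forall_take, ← List.map_take, pathSum_map_equivBool]
  exact and_congr (by omega) (forall_congr' fun k => by omega)

lemma isDyck_iff_exists_toPath_eq (s : List Bool) :
    IsDyck s ↔ ∃ p : DyckWord, p.toPath = s := by
  constructor
  · intro h
    have hs : (s.map equivBool.symm).map equivBool = s := by simp
    rw [← hs, isDyck_map_equivBool_iff] at h
    exact ⟨⟨_, h.1, h.2⟩, hs⟩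
  · rintro ⟨p, rfl⟩
    exact (isDyck_map_equivBool_iff _).mpr ⟨p.count_U_eq_count_D, p.count_D_le_count_U⟩

section Weight

variable {R : Type*} [CommRing R] (P Q : R)

@[simp]
lemma pathWeight_nil : pathWeight P Q [] = 1 := rfl

@[simp]
lemma pathWeight_singleton (a : Bool) : pathWeight P Q [a] = 1 := rfl

lemma pathWeight_cons_cons (a b : Bool) (s : List Bool) :
    pathWeight P Q (a :: b :: s) = pairWeight P Q a b * pathWeight P Q (b :: s) := by
  simp [pathWeight]

lemma pathWeight_cons_true (a : Bool) (s : List Bool) :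
    pathWeight P Q (a :: true :: s) = pathWeight P Q (true :: s) := by
  rw [pathWeight_cons_cons, pairWeight, one_mul]

lemma pathWeight_append {s : List Bool} (hs : s ≠ []) (t : List Bool) :
    pathWeight P Q (s ++ t) = pathWeight P Q s * pathWeight P Q (s.getLast hs :: t) := by
  induction s with
  | nil => exact absurd rfl hs
  | cons a s ih =>
    rcases s with _ | ⟨b, s⟩
    · simp
    · simp only [List.cons_append, pathWeight_cons_cons, List.getLast_cons_cons]
      rw [← List.cons_append, ih (List.cons_ne_nil b s), mul_assoc]

lemma pathWeight_cons_toPath (a : Bool) (p : DyckWord) :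
    pathWeight P Q (a :: p.toPath) = pathWeight P Q p.toPath := by
  rcases eq_or_ne p 0 with rfl | hp
  · rfl
  · obtain ⟨t, ht⟩ := DyckWord.exists_toPath_eq_of_ne_zero hp
    rw [ht, List.cons_append, pathWeight_cons_true]

/-- The weight of the first-return decomposition `U p D q`: the down-step closing `p` is
preceded by an up-step exactly when `p` is empty. -/
lemma pathWeight_toPath_nest_add (p q : DyckWord) :
    pathWeight P Q (p.nest + q).toPath
      = (if p = 0 then Q else P) * pathWeight P Q p.toPath * pathWeight P Q q.toPath := by
  rw [DyckWord.toPath_nest_add]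
  rcases eq_or_ne p 0 with rfl | hp
  · simp [pathWeight_cons_cons, pairWeight, pathWeight_cons_toPath]
  · obtain ⟨t, ht⟩ := DyckWord.exists_toPath_eq_of_ne_zero hp
    have hne : p.toPath ≠ [] := by simp [ht]
    have hlast : p.toPath.getLast hne = false := by simp [ht]
    calc pathWeight P Q (true :: p.toPath ++ false :: q.toPath)
        = pathWeight P Q (p.toPath ++ false :: q.toPath) := by
          rw [List.cons_append, ht, List.cons_append, List.cons_append, pathWeight_cons_true]
      _ = pathWeight P Q p.toPath * (P * pathWeight P Q q.toPath) := by
          rw [pathWeight_append P Q hne, hlast, pathWeight_cons_cons, pathWeight_cons_toPath]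
          rfl
      _ = _ := by rw [if_neg hp]; ring

end Weight

namespace DyckWord

open Finset

def ofSemilength (n : ℕ) : Finset DyckWord :=
  univ.map (Function.Embedding.subtype fun p : DyckWord => p.semilength = n)

@[simp]
lemma mem_ofSemilength {n : ℕ} {p : DyckWord} : p ∈ ofSemilength n ↔ p.semilength = n := by
  simp [ofSemilength]

lemma ofSemilength_zero : ofSemilength 0 = {0} := by
  ext p
  simp [semilength_eq_zero_iff]

/-- The first-return decomposition `p = U (insidePart p) D (outsidePart p)`. -/
lemma sum_ofSemilength_succ {M : Type*} [AddCommMonoid M] (f : DyckWord → M) (n : ℕ) :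
    ∑ p ∈ ofSemilength (n + 1), f p
      = ∑ ij ∈ antidiagonal n, ∑ p ∈ ofSemilength ij.1, ∑ q ∈ ofSemilength ij.2,
          f (p.nest + q) := by
  simp_rw [← sum_product']
  rw [sum_sigma']
  have ne_zero_of_mem {p : DyckWord} (hp : p ∈ ofSemilength (n + 1)) : p ≠ 0 := by
    rintro rfl
    simp at hp
  refine sum_nbij' (fun p => ⟨(p.insidePart.semilength, p.outsidePart.semilength),
      p.insidePart, p.outsidePart⟩) (fun x => x.2.1.nest + x.2.2) ?_ ?_ ?_ ?_ ?_
  · intro p hp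
    have := semilength_insidePart_add_semilength_outsidePart_add_one (ne_zero_of_mem hp)
    simp_all
  · rintro ⟨⟨i, j⟩, p, q⟩ h
    simp_all
    omega
  · exact fun p hp => nest_insidePart_add_outsidePart (ne_zero_of_mem hp)
  · rintro ⟨⟨i, j⟩, p, q⟩ h
    simp_all
  · intro p hp
    rw [nest_insidePart_add_outsidePart (ne_zero_of_mem hp)]

end DyckWord

section Recurrence

open Finset

variable {R : Type*} [CommRing R] (P Q : R)

lemma Zn_eq_sum_ofSemilength (n : ℕ) :
    Zn P Q n = ∑ p ∈ DyckWord.ofSemilength n, pathWeight P Q p.toPath := by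
  have hpaths : (univ.filter fun f : Fin (2 * n) → Bool => IsDyck (List.ofFn f)).image List.ofFn
      = (DyckWord.ofSemilength n).image DyckWord.toPath := by
    ext s
    simp only [mem_image, mem_filter, mem_univ, true_and, DyckWord.mem_ofSemilength]
    constructor
    · rintro ⟨f, hf, rfl⟩
      obtain ⟨p, hp⟩ := (isDyck_iff_exists_toPath_eq _).mp hf
      refine ⟨p, ?_, hp⟩
      have hlen := congrArg List.length hp
      rw [DyckWord.length_toPath, List.length_ofFn] at hlen
      omega
    · rintro ⟨p, rfl, rfl⟩
      obtain ⟨f, hf⟩ : ∃ f : Fin (2 * p.semilength) → Bool, List.ofFn f = p.toPath := by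
        rw [← p.length_toPath]
        exact ⟨_, List.ofFn_get _⟩
      refine ⟨f, ?_, hf⟩
      rw [hf, isDyck_iff_exists_toPath_eq]
      exact ⟨p, rfl⟩
  rw [Zn, ← sum_image (List.ofFn_injective.injOn), hpaths,
    sum_image (DyckWord.toPath_injective.injOn)]

lemma Zn_zero : Zn P Q 0 = 1 := by
  simp [Zn_eq_sum_ofSemilength, DyckWord.ofSemilength_zero]

lemma Zn_succ (n : ℕ) :
    Zn P Q (n + 1)
      = ∑ ij ∈ antidiagonal n, (if ij.1 = 0 then Q else P) * Zn P Q ij.1 * Zn P Q ij.2 := by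
  rw [Zn_eq_sum_ofSemilength, DyckWord.sum_ofSemilength_succ]
  refine sum_congr rfl fun ij _ => ?_
  rw [Zn_eq_sum_ofSemilength, Zn_eq_sum_ofSemilength, mul_sum (DyckWord.ofSemilength ij.1),
    sum_mul_sum]
  refine sum_congr rfl fun p hp => sum_congr rfl fun q _ => ?_
  rw [DyckWord.mem_ofSemilength] at hp
  simp only [pathWeight_toPath_nest_add, ← hp, DyckWord.semilength_eq_zero_iff]

end Recurrence

/-- the generating function `Z(z) = Σ Z_n z^n` satisfies
`zP·Z² - (1 - z(Q-P))·Z + 1 = 0`. -/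
theorem stmt1 {R : Type*} [CommRing R] (P Q : R) :
    X * C P * (PowerSeries.mk (Zn P Q)) ^ 2
      - (1 - X * (C Q - C P)) * (PowerSeries.mk (Zn P Q)) + 1 = 0 := by
  set Z := PowerSeries.mk (Zn P Q)
  have hfirst : PowerSeries.mk (fun i => (if i = 0 then Q else P) * Zn P Q i)
      = C P * Z + (C Q - C P) := by
    ext (_ | n) <;> simp [Z, Zn_zero]
  have hZ : Z = 1 + X * (PowerSeries.mk (fun i => (if i = 0 then Q else P) * Zn P Q i) * Z) := by
    ext (_ | n)
    · simp [Z, Zn_zero]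
    · rw [map_add, coeff_succ_X_mul, coeff_mul]
      simp [Z, Zn_succ]
  rw [hfirst] at hZ
  linear_combination -hZ
end

section
/- For y with y ∉ {0, ±1} and parameters Y, Y_1 with Y_1 ≠ 0, set d = (Y_1 - Y)/Y_1 and α = (d + y)/(y^2 (1 + d y)) (assuming 1 + d y ≠ 0). If L_i^{(0)} = (1 - y^{i+1})/((1+y)^i (1-y)) and L_i^{(1)} = Y·L_i^{(0)} + (Y_1 - Y)·L_{i-1}^{(0)} (with L_{-1}^{(0)} = 0), then L_i^{(1)} = Y_1·(1 + d y)·(1 - α y^{i+2}) / ((1+y)^i (1 - y)) for all i ≥ 0. -/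
/-!
Over the common denominator `(1 + y) ^ i * (1 - y)` (the shifted term picks up a factor `1 + y`,
and `1 - y ^ 0 = 0` accounts for `L₋₁⁽⁰⁾ = 0`), `L_i⁽¹⁾` has numerator
`Y (1 - y^{i+1}) + (Y₁ - Y)(1 + y)(1 - y^i)`. This is a polynomial identity away from the target
numerator once `d` and `α` are eliminated through `Y₁ d = Y₁ - Y` and `α y² (1 + d y) = d + y`.
-/

lemma div_pow_mul_eq_mul_div_pow_succ_mul {F : Type*} [Field F] {c : F} (hc : c ≠ 0)
    (a b : F) (n : ℕ) : a / (c ^ n * b) = c * a / (c ^ (n + 1) * b) := by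
  rw [pow_succ', mul_assoc, mul_div_mul_left _ _ hc]

lemma shifted_combination_eq_div {F : Type*} [Field F] {y : F} (hym : y ≠ -1) (Y Y1 : F)
    (L0 L1 : ℕ → F)
    (hL0 : ∀ i : ℕ, L0 i = (1 - y ^ (i + 1)) / ((1 + y) ^ i * (1 - y)))
    (hL1z : L1 0 = Y * L0 0)
    (hL1 : ∀ i ≥ 1, L1 i = Y * L0 i + (Y1 - Y) * L0 (i - 1)) (i : ℕ) :
    L1 i = (Y * (1 - y ^ (i + 1)) + (Y1 - Y) * ((1 + y) * (1 - y ^ i))) /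
      ((1 + y) ^ i * (1 - y)) := by
  have h1y : 1 + y ≠ 0 := fun h ↦ hym (eq_neg_of_add_eq_zero_right h)
  cases i with
  | zero => simp [hL1z, hL0, mul_div_assoc]
  | succ n =>
    rw [hL1 (n + 1) n.succ_pos, Nat.add_sub_cancel, hL0, hL0,
      div_pow_mul_eq_mul_div_pow_succ_mul h1y (1 - y ^ (n + 1))]
    ring

lemma numerator_eq {F : Type*} [Field F] {y Y Y1 d α : F} (hd : Y1 * d = Y1 - Y)
    (hα : α * (y ^ 2 * (1 + d * y)) = d + y) (i : ℕ) :
    Y * (1 - y ^ (i + 1)) + (Y1 - Y) * ((1 + y) * (1 - y ^ i)) =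
      Y1 * (1 + d * y) * (1 - α * y ^ (i + 2)) := by
  linear_combination (y ^ i - y) * hd + Y1 * y ^ i * hα

theorem stmt5_general {F : Type*} [Field F] (y Y Y1 : F)
    (hy0 : y ≠ 0) (hym : y ≠ -1) (hY1 : Y1 ≠ 0)
    (d α : F) (hd : d = (Y1 - Y) / Y1) (hdy : 1 + d * y ≠ 0)
    (hα : α = (d + y) / (y ^ 2 * (1 + d * y)))
    (L0 L1 : ℕ → F)
    (hL0 : ∀ i : ℕ, L0 i = (1 - y ^ (i + 1)) / ((1 + y) ^ i * (1 - y)))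
    (hL1z : L1 0 = Y * L0 0)
    (hL1 : ∀ i ≥ 1, L1 i = Y * L0 i + (Y1 - Y) * L0 (i - 1)) :
    ∀ i : ℕ, L1 i = Y1 * (1 + d * y) * (1 - α * y ^ (i + 2)) / ((1 + y) ^ i * (1 - y)) := by
  have hd' : Y1 * d = Y1 - Y := by rw [hd, mul_div_cancel₀ _ hY1]
  have hα' : α * (y ^ 2 * (1 + d * y)) = d + y := by
    rw [hα, div_mul_cancel₀ _ (mul_ne_zero (pow_ne_zero 2 hy0) hdy)]
  intro i
  rw [shifted_combination_eq_div hym Y Y1 L0 L1 hL0 hL1z hL1 i, numerator_eq hd' hα' i]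

/-- with `d = (Y₁-Y)/Y₁` and `α = (d+y)/(y²(1+dy))`, the sequence
`L_i⁽¹⁾ = Y·L_i⁽⁰⁾ + (Y₁-Y)·L_{i-1}⁽⁰⁾` (with `L₋₁⁽⁰⁾ = 0`) built from
`L_i⁽⁰⁾ = (1-y^{i+1})/((1+y)^i(1-y))` equals
`Y₁(1+dy)(1-αy^{i+2})/((1+y)^i(1-y))`. -/
theorem stmt5 {F : Type*} [Field F] (y Y Y1 : F)
    (hy0 : y ≠ 0) (hy1 : y ≠ 1) (hym : y ≠ -1) (hY1 : Y1 ≠ 0)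
    (d α : F) (hd : d = (Y1 - Y) / Y1) (hdy : 1 + d * y ≠ 0)
    (hα : α = (d + y) / (y ^ 2 * (1 + d * y)))
    (L0 L1 : ℕ → F)
    (hL0 : ∀ i : ℕ, L0 i = (1 - y ^ (i + 1)) / ((1 + y) ^ i * (1 - y)))
    (hL1z : L1 0 = Y * L0 0)
    (hL1 : ∀ i ≥ 1, L1 i = Y * L0 i + (Y1 - Y) * L0 (i - 1)) :
    ∀ i : ℕ, L1 i = Y1 * (1 + d * y) * (1 - α * y ^ (i + 2)) / ((1 + y) ^ i * (1 - y)) :=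
  stmt5_general y Y Y1 hy0 hym hY1 d α hd hdy hα L0 L1 hL0 hL1z hL1
end

section
/- Fix a field element y with y ∉ {0, ±1} and a parameter α, and define for i ≥ 0: P_i = P·(1-y^i)(1-α y^{i+3})/((1-y^{i+1})(1-α y^{i+2})) and Q_i = Q·(1-y^i)(1-α^2 y^{i+3})/((1-α y^{i+1})(1-α y^{i+2})), where P = y(1-αy)^2/D, Q = αy(1-y)^2/D, and D = 1 + y + αy - 6αy^2 + αy^3 + α^2 y^3 + α^2 y^4. Then for all i ≥ 1: P_i = t_• + P_i(P_{i-1} + Q_i + Q_{i+1}) and Q_i = t_∘ + Q_i(P_{i-1} + Q_i) + P_i Q_{i+1}, where t_• = y(1-αy)^3(1-αy^3)/D^2 and t_∘ = αy(1-y)^3(1-α^2 y^3)/D^2. -/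
set_option maxHeartbeats 2000000 in
/-- the explicit formulas for `P_i`, `Q_i` solve the recursion
system `P_i = t_• + P_i(P_{i-1} + Q_i + Q_{i+1})`,
`Q_i = t_∘ + Q_i(P_{i-1} + Q_i) + P_i Q_{i+1}` for `i ≥ 1`. -/
theorem stmt6 {F : Type*} [Field F] (y α : F)
    (hy0 : y ≠ 0) (hy1 : y ≠ 1) (hym : y ≠ -1)
    (D : F) (hD : D = 1 + y + α * y - 6 * α * y ^ 2 + α * y ^ 3 + α ^ 2 * y ^ 3 + α ^ 2 * y ^ 4)
    (hD0 : D ≠ 0)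
    (hyd : ∀ i : ℕ, 1 - y ^ (i + 1) ≠ 0)
    (hayd : ∀ i : ℕ, 1 - α * y ^ (i + 1) ≠ 0)
    (P Q : F) (hP : P = y * (1 - α * y) ^ 2 / D) (hQ : Q = α * y * (1 - y) ^ 2 / D)
    (tb tc : F)
    (htb : tb = y * (1 - α * y) ^ 3 * (1 - α * y ^ 3) / D ^ 2)
    (htc : tc = α * y * (1 - y) ^ 3 * (1 - α ^ 2 * y ^ 3) / D ^ 2)
    (Pi Qi : ℕ → F)
    (hPi : ∀ i : ℕ, Pi i =
      P * (1 - y ^ i) * (1 - α * y ^ (i + 3)) / ((1 - y ^ (i + 1)) * (1 - α * y ^ (i + 2))))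
    (hQi : ∀ i : ℕ, Qi i =
      Q * (1 - y ^ i) * (1 - α ^ 2 * y ^ (i + 3)) /
        ((1 - α * y ^ (i + 1)) * (1 - α * y ^ (i + 2)))) :
    ∀ i ≥ 1,
      Pi i = tb + Pi i * (Pi (i - 1) + Qi i + Qi (i + 1)) ∧
      Qi i = tc + Qi i * (Pi (i - 1) + Qi i) + Pi i * Qi (i + 1) := by
  intro i hi
  obtain ⟨j, rfl⟩ : ∃ j, i = j + 1 := ⟨i - 1, (Nat.succ_pred_eq_of_pos hi).symm⟩
  have e : ∀ k : ℕ, y ^ (j + k) = y ^ j * y ^ k := fun k => pow_add y j k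
  have h1 : (1 : F) - y ^ j * y ≠ 0 := by have := hyd j; rwa [e, pow_one] at this
  have h2 : (1 : F) - y ^ j * y ^ 2 ≠ 0 := by rw [← e]; exact hyd (j + 1)
  have h3 : (1 : F) - α * (y ^ j * y ^ 2) ≠ 0 := by rw [← e]; exact hayd (j + 1)
  have h4 : (1 : F) - α * (y ^ j * y ^ 3) ≠ 0 := by rw [← e]; exact hayd (j + 2)
  have h5 : (1 : F) - α * (y ^ j * y ^ 4) ≠ 0 := by rw [← e]; exact hayd (j + 3)
  have hPj := hPi j
  have hPj1 := hPi (j + 1)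
  have hQj1 := hQi (j + 1)
  have hQj2 := hQi (j + 2)
  simp only [Nat.add_sub_cancel, show j + 1 + 1 = j + 2 from rfl,
    show j + 1 + 2 = j + 3 from rfl, show j + 1 + 3 = j + 4 from rfl,
    show j + 2 + 1 = j + 3 from rfl, show j + 2 + 2 = j + 4 from rfl,
    show j + 2 + 3 = j + 5 from rfl, e, pow_one] at hPj hPj1 hQj1 hQj2
  simp only [Nat.add_sub_cancel]
  subst hP hQ htb htc
  have hPj' : Pi j = y * (1 - α * y) ^ 2 * (1 - y ^ j) * (1 - α * (y ^ j * y ^ 3)) /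
      (D * ((1 - y ^ j * y) * (1 - α * (y ^ j * y ^ 2)))) := by
    rw [hPj, div_mul_eq_mul_div, div_mul_eq_mul_div, div_div]
  have hPj1' : Pi (j + 1) = y * (1 - α * y) ^ 2 * (1 - y ^ j * y) * (1 - α * (y ^ j * y ^ 4)) /
      (D * ((1 - y ^ j * y ^ 2) * (1 - α * (y ^ j * y ^ 3)))) := by
    rw [hPj1, div_mul_eq_mul_div, div_mul_eq_mul_div, div_div]
  have hQj1' : Qi (j + 1) = α * y * (1 - y) ^ 2 * (1 - y ^ j * y) * (1 - α ^ 2 * (y ^ j * y ^ 4)) /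
      (D * ((1 - α * (y ^ j * y ^ 2)) * (1 - α * (y ^ j * y ^ 3)))) := by
    rw [hQj1, div_mul_eq_mul_div, div_mul_eq_mul_div, div_div]
  have hQj2' : Qi (j + 2) = α * y * (1 - y) ^ 2 * (1 - y ^ j * y ^ 2) * (1 - α ^ 2 * (y ^ j * y ^ 5)) /
      (D * ((1 - α * (y ^ j * y ^ 3)) * (1 - α * (y ^ j * y ^ 4)))) := by
    rw [hQj2, div_mul_eq_mul_div, div_mul_eq_mul_div, div_div]
  have hdP0 : D * ((1 - y ^ j * y) * (1 - α * (y ^ j * y ^ 2))) ≠ 0 :=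
    mul_ne_zero hD0 (mul_ne_zero h1 h3)
  have hdP1 : D * ((1 - y ^ j * y ^ 2) * (1 - α * (y ^ j * y ^ 3))) ≠ 0 :=
    mul_ne_zero hD0 (mul_ne_zero h2 h4)
  have hdQ1 : D * ((1 - α * (y ^ j * y ^ 2)) * (1 - α * (y ^ j * y ^ 3))) ≠ 0 :=
    mul_ne_zero hD0 (mul_ne_zero h3 h4)
  have hdQ2 : D * ((1 - α * (y ^ j * y ^ 3)) * (1 - α * (y ^ j * y ^ 4))) ≠ 0 :=
    mul_ne_zero hD0 (mul_ne_zero h4 h5)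
  have hD2 : D ^ 2 ≠ 0 := pow_ne_zero 2 hD0
  constructor
  · rw [hPj1', hPj', hQj1', hQj2',
      div_add_div _ _ hdP0 hdQ1,
      div_add_div _ _ (mul_ne_zero hdP0 hdQ1) hdQ2,
      div_mul_div_comm,
      div_add_div _ _ hD2 (mul_ne_zero hdP1 (mul_ne_zero (mul_ne_zero hdP0 hdQ1) hdQ2)),
      div_eq_div_iff hdP1
        (mul_ne_zero hD2 (mul_ne_zero hdP1 (mul_ne_zero (mul_ne_zero hdP0 hdQ1) hdQ2)))]
    linear_combination
      (1 * y * D ^ 5 - 2 * y ^ 2 * y ^ j * D ^ 5 - 2 * y ^ 2 * α * D ^ 5 - 1 * y ^ 3 * y ^ j * D ^ 5 + 1 * y ^ 3 * (y ^ j) ^ 2 * D ^ 5 + 2 * y ^ 3 * α * y ^ j * D ^ 5 + 1 * y ^ 3 * α ^ 2 * D ^ 5 + 2 * y ^ 4 * (y ^ j) ^ 2 * D ^ 5 - 1 * y ^ 4 * α * y ^ j * D ^ 5 + 2 * y ^ 4 * α * (y ^ j) ^ 2 * D ^ 5 + 2 * y ^ 4 * α ^ 2 * y ^ j * D ^ 5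 - 1 * y ^ 5 * (y ^ j) ^ 3 * D ^ 5 - 2 * y ^ 5 * α * y ^ j * D ^ 5 + 4 * y ^ 5 * α * (y ^ j) ^ 2 * D ^ 5 - 2 * y ^ 5 * α * (y ^ j) ^ 3 * D ^ 5 + 5 * y ^ 5 * α ^ 2 * y ^ j * D ^ 5 - 6 * y ^ 5 * α ^ 2 * (y ^ j) ^ 2 * D ^ 5 - 2 * y ^ 5 * α ^ 3 * y ^ j * D ^ 5 + 7 * y ^ 6 * α * (y ^ j) ^ 2 * D ^ 5 - 5 * y ^ 6 * α * (y ^ j) ^ 3 * D ^ 5 + 4 * y ^ 6 * α ^ 2 * y ^ j * D ^ 5 - 8 * y ^ 6 * α ^ 2 * (y ^ j) ^ 2 * D ^ 5 + 2 * y ^ 6 * α ^ 2 * (y ^ j) ^ 3 * D ^ 5 - 3 * y ^ 6 * α ^ 3 * y ^ j * D ^ 5 + 2 * y ^ 6 * α ^ 3 * (y ^ j) ^ 2 * D ^ 5 + 2 * y ^ 7 * α * (y ^ j) ^ 2 * D ^ 5 - 8 * y ^ 7 * α * (y ^ j) ^ 3 * D ^ 5 + 2 * y ^ 7 * α * (y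 ^ j) ^ 4 * D ^ 5 - 7 * y ^ 7 * α ^ 2 * (y ^ j) ^ 2 * D ^ 5 + 1 * y ^ 7 * α ^ 2 * (y ^ j) ^ 4 * D ^ 5 - 2 * y ^ 7 * α ^ 3 * y ^ j * D ^ 5 - 4 * y ^ 7 * α ^ 3 * (y ^ j) ^ 2 * D ^ 5 + 2 * y ^ 7 * α ^ 3 * (y ^ j) ^ 3 * D ^ 5 + 1 * y ^ 7 * α ^ 4 * (y ^ j) ^ 2 * D ^ 5 - 4 * y ^ 8 * α * (y ^ j) ^ 3 * D ^ 5 + 3 * y ^ 8 * α * (y ^ j) ^ 4 * D ^ 5 + 2 * y ^ 8 * α ^ 2 * (y ^ j) ^ 2 * D ^ 5 - 4 * y ^ 8 * α ^ 2 * (y ^ j) ^ 3 * D ^ 5 + 4 * y ^ 8 * α ^ 2 * (y ^ j) ^ 4 * D ^ 5 - 7 * y ^ 8 * α ^ 3 * (y ^ j) ^ 2 * D ^ 5 + 16 * y ^ 8 * α ^ 3 * (y ^ j) ^ 3 * D ^ 5 - 2 * y ^ 8 * α ^ 3 * (y ^ j) ^ 4 * D ^ 5 + 6 * y ^ 8 *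 α ^ 4 * (y ^ j) ^ 2 * D ^ 5 - 2 * y ^ 8 * α ^ 4 * (y ^ j) ^ 3 * D ^ 5 + 2 * y ^ 9 * α * (y ^ j) ^ 4 * D ^ 5 + 1 * y ^ 9 * α ^ 2 * (y ^ j) ^ 2 * D ^ 5 - 11 * y ^ 9 * α ^ 2 * (y ^ j) ^ 3 * D ^ 5 + 13 * y ^ 9 * α ^ 2 * (y ^ j) ^ 4 * D ^ 5 - 1 * y ^ 9 * α ^ 2 * (y ^ j) ^ 5 * D ^ 5 - 10 * y ^ 9 * α ^ 3 * (y ^ j) ^ 2 * D ^ 5 + 24 * y ^ 9 * α ^ 3 * (y ^ j) ^ 3 * D ^ 5 - 8 * y ^ 9 * α ^ 3 * (y ^ j) ^ 4 * D ^ 5 + 7 * y ^ 9 * α ^ 4 * (y ^ j) ^ 2 * D ^ 5 - 7 * y ^ 9 * α ^ 4 * (y ^ j) ^ 3 * D ^ 5 + 1 * y ^ 9 * α ^ 4 * (y ^ j) ^ 4 * D ^ 5 - 8 * y ^ 10 * α ^ 2 * (y ^ j) ^ 3 * D ^ 5 + 16 * y ^ 10 * α ^ 2 * (y ^ j) ^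 4 * D ^ 5 - 6 * y ^ 10 * α ^ 2 * (y ^ j) ^ 5 * D ^ 5 - 2 * y ^ 10 * α ^ 3 * (y ^ j) ^ 2 * D ^ 5 + 21 * y ^ 10 * α ^ 3 * (y ^ j) ^ 3 * D ^ 5 - 16 * y ^ 10 * α ^ 3 * (y ^ j) ^ 4 * D ^ 5 - 1 * y ^ 10 * α ^ 3 * (y ^ j) ^ 5 * D ^ 5 + 6 * y ^ 10 * α ^ 4 * (y ^ j) ^ 2 * D ^ 5 - 4 * y ^ 10 * α ^ 4 * (y ^ j) ^ 3 * D ^ 5 - 4 * y ^ 10 * α ^ 4 * (y ^ j) ^ 4 * D ^ 5 - 3 * y ^ 10 * α ^ 5 * (y ^ j) ^ 3 * D ^ 5 - 1 * y ^ 11 * α ^ 2 * (y ^ j) ^ 3 * D ^ 5 + 13 * y ^ 11 * α ^ 2 * (y ^ j) ^ 4 * D ^ 5 - 7 * y ^ 11 * α ^ 2 * (y ^ j) ^ 5 * D ^ 5 + 8 * y ^ 11 * α ^ 3 * (y ^ j) ^ 3 * D ^ 5 - 4 * y ^ 11 * α ^ 3 * (y ^ j) ^ 4 * D ^ 5 -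 2 * y ^ 11 * α ^ 3 * (y ^ j) ^ 5 * D ^ 5 + 1 * y ^ 11 * α ^ 4 * (y ^ j) ^ 2 * D ^ 5 + 7 * y ^ 11 * α ^ 4 * (y ^ j) ^ 3 * D ^ 5 - 16 * y ^ 11 * α ^ 4 * (y ^ j) ^ 4 * D ^ 5 + 5 * y ^ 11 * α ^ 4 * (y ^ j) ^ 5 * D ^ 5 - 8 * y ^ 11 * α ^ 5 * (y ^ j) ^ 3 * D ^ 5 + 6 * y ^ 11 * α ^ 5 * (y ^ j) ^ 4 * D ^ 5 + 2 * y ^ 12 * α ^ 2 * (y ^ j) ^ 4 * D ^ 5 - 6 * y ^ 12 * α ^ 2 * (y ^ j) ^ 5 * D ^ 5 - 1 * y ^ 12 * α ^ 3 * (y ^ j) ^ 3 * D ^ 5 + 3 * y ^ 12 * α ^ 3 * (y ^ j) ^ 4 * D ^ 5 - 15 * y ^ 12 * α ^ 3 * (y ^ j) ^ 5 * D ^ 5 + 3 * y ^ 12 * α ^ 3 * (y ^ j) ^ 6 * D ^ 5 + 8 * y ^ 12 * α ^ 4 * (y ^ j) ^ 3 * D ^ 5 - 40 * y ^ 12 *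 α ^ 4 * (y ^ j) ^ 4 * D ^ 5 + 16 * y ^ 12 * α ^ 4 * (y ^ j) ^ 5 * D ^ 5 - 13 * y ^ 12 * α ^ 5 * (y ^ j) ^ 3 * D ^ 5 + 13 * y ^ 12 * α ^ 5 * (y ^ j) ^ 4 * D ^ 5 - 3 * y ^ 12 * α ^ 5 * (y ^ j) ^ 5 * D ^ 5 - 1 * y ^ 13 * α ^ 2 * (y ^ j) ^ 5 * D ^ 5 + 10 * y ^ 13 * α ^ 3 * (y ^ j) ^ 4 * D ^ 5 - 22 * y ^ 13 * α ^ 3 * (y ^ j) ^ 5 * D ^ 5 + 8 * y ^ 13 * α ^ 3 * (y ^ j) ^ 6 * D ^ 5 + 5 * y ^ 13 * α ^ 4 * (y ^ j) ^ 3 * D ^ 5 - 32 * y ^ 13 * α ^ 4 * (y ^ j) ^ 4 * D ^ 5 + 32 * y ^ 13 * α ^ 4 * (y ^ j) ^ 5 * D ^ 5 - 3 * y ^ 13 * α ^ 4 * (y ^ j) ^ 6 * D ^ 5 - 8 * y ^ 13 * α ^ 5 * (y ^ j) ^ 3 * D ^ 5 + 18 * y ^ 13 * α ^ 5 * (y ^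 j) ^ 4 * D ^ 5 - 2 * y ^ 13 * α ^ 5 * (y ^ j) ^ 5 * D ^ 5 + 3 * y ^ 13 * α ^ 6 * (y ^ j) ^ 4 * D ^ 5 + 3 * y ^ 14 * α ^ 3 * (y ^ j) ^ 4 * D ^ 5 - 17 * y ^ 14 * α ^ 3 * (y ^ j) ^ 5 * D ^ 5 + 13 * y ^ 14 * α ^ 3 * (y ^ j) ^ 6 * D ^ 5 - 18 * y ^ 14 * α ^ 4 * (y ^ j) ^ 4 * D ^ 5 + 28 * y ^ 14 * α ^ 4 * (y ^ j) ^ 5 * D ^ 5 - 2 * y ^ 14 * α ^ 4 * (y ^ j) ^ 6 * D ^ 5 - 3 * y ^ 14 * α ^ 5 * (y ^ j) ^ 3 * D ^ 5 + 3 * y ^ 14 * α ^ 5 * (y ^ j) ^ 4 * D ^ 5 + 8 * y ^ 14 * α ^ 5 * (y ^ j) ^ 5 * D ^ 5 - 3 * y ^ 14 * α ^ 5 * (y ^ j) ^ 6 * D ^ 5 + 8 * y ^ 14 * α ^ 6 * (y ^ j) ^ 4 * D ^ 5 - 6 * y ^ 14 * α ^ 6 * (y ^ j) ^ 5 * D ^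 5 - 6 * y ^ 15 * α ^ 3 * (y ^ j) ^ 5 * D ^ 5 + 8 * y ^ 15 * α ^ 3 * (y ^ j) ^ 6 * D ^ 5 - 3 * y ^ 15 * α ^ 4 * (y ^ j) ^ 4 * D ^ 5 + 8 * y ^ 15 * α ^ 4 * (y ^ j) ^ 5 * D ^ 5 + 3 * y ^ 15 * α ^ 4 * (y ^ j) ^ 6 * D ^ 5 - 3 * y ^ 15 * α ^ 4 * (y ^ j) ^ 7 * D ^ 5 - 2 * y ^ 15 * α ^ 5 * (y ^ j) ^ 4 * D ^ 5 + 28 * y ^ 15 * α ^ 5 * (y ^ j) ^ 5 * D ^ 5 - 18 * y ^ 15 * α ^ 5 * (y ^ j) ^ 6 * D ^ 5 + 13 * y ^ 15 * α ^ 6 * (y ^ j) ^ 4 * D ^ 5 - 17 * y ^ 15 * α ^ 6 * (y ^ j) ^ 5 * D ^ 5 + 3 * y ^ 15 * α ^ 6 * (y ^ j) ^ 6 * D ^ 5 + 3 * y ^ 16 * α ^ 3 * (y ^ j) ^ 6 * D ^ 5 - 2 * y ^ 16 * α ^ 4 * (y ^ j) ^ 5 * D ^ 5 + 18 * y ^ 16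 * α ^ 4 * (y ^ j) ^ 6 * D ^ 5 - 8 * y ^ 16 * α ^ 4 * (y ^ j) ^ 7 * D ^ 5 - 3 * y ^ 16 * α ^ 5 * (y ^ j) ^ 4 * D ^ 5 + 32 * y ^ 16 * α ^ 5 * (y ^ j) ^ 5 * D ^ 5 - 32 * y ^ 16 * α ^ 5 * (y ^ j) ^ 6 * D ^ 5 + 5 * y ^ 16 * α ^ 5 * (y ^ j) ^ 7 * D ^ 5 + 8 * y ^ 16 * α ^ 6 * (y ^ j) ^ 4 * D ^ 5 - 22 * y ^ 16 * α ^ 6 * (y ^ j) ^ 5 * D ^ 5 + 10 * y ^ 16 * α ^ 6 * (y ^ j) ^ 6 * D ^ 5 - 1 * y ^ 16 * α ^ 7 * (y ^ j) ^ 5 * D ^ 5 - 3 * y ^ 17 * α ^ 4 * (y ^ j) ^ 5 * D ^ 5 + 13 * y ^ 17 * α ^ 4 * (y ^ j) ^ 6 * D ^ 5 - 13 * y ^ 17 * α ^ 4 * (y ^ j) ^ 7 * D ^ 5 + 16 * y ^ 17 * α ^ 5 * (y ^ j) ^ 5 * D ^ 5 - 40 * y ^ 17 * α ^ 5 * (y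 ^ j) ^ 6 * D ^ 5 + 8 * y ^ 17 * α ^ 5 * (y ^ j) ^ 7 * D ^ 5 + 3 * y ^ 17 * α ^ 6 * (y ^ j) ^ 4 * D ^ 5 - 15 * y ^ 17 * α ^ 6 * (y ^ j) ^ 5 * D ^ 5 + 3 * y ^ 17 * α ^ 6 * (y ^ j) ^ 6 * D ^ 5 - 1 * y ^ 17 * α ^ 6 * (y ^ j) ^ 7 * D ^ 5 - 6 * y ^ 17 * α ^ 7 * (y ^ j) ^ 5 * D ^ 5 + 2 * y ^ 17 * α ^ 7 * (y ^ j) ^ 6 * D ^ 5 + 6 * y ^ 18 * α ^ 4 * (y ^ j) ^ 6 * D ^ 5 - 8 * y ^ 18 * α ^ 4 * (y ^ j) ^ 7 * D ^ 5 + 5 * y ^ 18 * α ^ 5 * (y ^ j) ^ 5 * D ^ 5 - 16 * y ^ 18 * α ^ 5 * (y ^ j) ^ 6 * D ^ 5 + 7 * y ^ 18 * α ^ 5 * (y ^ j) ^ 7 * D ^ 5 + 1 * y ^ 18 * α ^ 5 * (y ^ j) ^ 8 * D ^ 5 - 2 * y ^ 18 * α ^ 6 * (y ^ j) ^ 5 *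 D ^ 5 - 4 * y ^ 18 * α ^ 6 * (y ^ j) ^ 6 * D ^ 5 + 8 * y ^ 18 * α ^ 6 * (y ^ j) ^ 7 * D ^ 5 - 7 * y ^ 18 * α ^ 7 * (y ^ j) ^ 5 * D ^ 5 + 13 * y ^ 18 * α ^ 7 * (y ^ j) ^ 6 * D ^ 5 - 1 * y ^ 18 * α ^ 7 * (y ^ j) ^ 7 * D ^ 5 - 3 * y ^ 19 * α ^ 4 * (y ^ j) ^ 7 * D ^ 5 - 4 * y ^ 19 * α ^ 5 * (y ^ j) ^ 6 * D ^ 5 - 4 * y ^ 19 * α ^ 5 * (y ^ j) ^ 7 * D ^ 5 + 6 * y ^ 19 * α ^ 5 * (y ^ j) ^ 8 * D ^ 5 - 1 * y ^ 19 * α ^ 6 * (y ^ j) ^ 5 * D ^ 5 - 16 * y ^ 19 * α ^ 6 * (y ^ j) ^ 6 * D ^ 5 + 21 * y ^ 19 * α ^ 6 * (y ^ j) ^ 7 * D ^ 5 - 2 * y ^ 19 * α ^ 6 * (y ^ j) ^ 8 * D ^ 5 - 6 * y ^ 19 * α ^ 7 * (y ^ j) ^ 5 * D ^ 5 + 16 *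 y ^ 19 * α ^ 7 * (y ^ j) ^ 6 * D ^ 5 - 8 * y ^ 19 * α ^ 7 * (y ^ j) ^ 7 * D ^ 5 + 1 * y ^ 20 * α ^ 5 * (y ^ j) ^ 6 * D ^ 5 - 7 * y ^ 20 * α ^ 5 * (y ^ j) ^ 7 * D ^ 5 + 7 * y ^ 20 * α ^ 5 * (y ^ j) ^ 8 * D ^ 5 - 8 * y ^ 20 * α ^ 6 * (y ^ j) ^ 6 * D ^ 5 + 24 * y ^ 20 * α ^ 6 * (y ^ j) ^ 7 * D ^ 5 - 10 * y ^ 20 * α ^ 6 * (y ^ j) ^ 8 * D ^ 5 - 1 * y ^ 20 * α ^ 7 * (y ^ j) ^ 5 * D ^ 5 + 13 * y ^ 20 * α ^ 7 * (y ^ j) ^ 6 * D ^ 5 - 11 * y ^ 20 * α ^ 7 * (y ^ j) ^ 7 * D ^ 5 + 1 * y ^ 20 * α ^ 7 * (y ^ j) ^ 8 * D ^ 5 + 2 * y ^ 20 * α ^ 8 * (y ^ j) ^ 6 * D ^ 5 - 2 * y ^ 21 * α ^ 5 * (y ^ j) ^ 7 * D ^ 5 + 6 * y ^ 21 * α ^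 5 * (y ^ j) ^ 8 * D ^ 5 - 2 * y ^ 21 * α ^ 6 * (y ^ j) ^ 6 * D ^ 5 + 16 * y ^ 21 * α ^ 6 * (y ^ j) ^ 7 * D ^ 5 - 7 * y ^ 21 * α ^ 6 * (y ^ j) ^ 8 * D ^ 5 + 4 * y ^ 21 * α ^ 7 * (y ^ j) ^ 6 * D ^ 5 - 4 * y ^ 21 * α ^ 7 * (y ^ j) ^ 7 * D ^ 5 + 2 * y ^ 21 * α ^ 7 * (y ^ j) ^ 8 * D ^ 5 + 3 * y ^ 21 * α ^ 8 * (y ^ j) ^ 6 * D ^ 5 - 4 * y ^ 21 * α ^ 8 * (y ^ j) ^ 7 * D ^ 5 + 1 * y ^ 22 * α ^ 5 * (y ^ j) ^ 8 * D ^ 5 + 2 * y ^ 22 * α ^ 6 * (y ^ j) ^ 7 * D ^ 5 - 4 * y ^ 22 * α ^ 6 * (y ^ j) ^ 8 * D ^ 5 - 2 * y ^ 22 * α ^ 6 * (y ^ j) ^ 9 * D ^ 5 + 1 * y ^ 22 * α ^ 7 * (y ^ j) ^ 6 * D ^ 5 - 7 * y ^ 22 * α ^ 7 * (y ^ j) ^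 8 * D ^ 5 + 2 * y ^ 22 * α ^ 8 * (y ^ j) ^ 6 * D ^ 5 - 8 * y ^ 22 * α ^ 8 * (y ^ j) ^ 7 * D ^ 5 + 2 * y ^ 22 * α ^ 8 * (y ^ j) ^ 8 * D ^ 5 + 2 * y ^ 23 * α ^ 6 * (y ^ j) ^ 8 * D ^ 5 - 3 * y ^ 23 * α ^ 6 * (y ^ j) ^ 9 * D ^ 5 + 2 * y ^ 23 * α ^ 7 * (y ^ j) ^ 7 * D ^ 5 - 8 * y ^ 23 * α ^ 7 * (y ^ j) ^ 8 * D ^ 5 + 4 * y ^ 23 * α ^ 7 * (y ^ j) ^ 9 * D ^ 5 - 5 * y ^ 23 * α ^ 8 * (y ^ j) ^ 7 * D ^ 5 + 7 * y ^ 23 * α ^ 8 * (y ^ j) ^ 8 * D ^ 5 - 2 * y ^ 24 * α ^ 6 * (y ^ j) ^ 9 * D ^ 5 - 6 * y ^ 24 * α ^ 7 * (y ^ j) ^ 8 * D ^ 5 + 5 * y ^ 24 * α ^ 7 * (y ^ j) ^ 9 * D ^ 5 - 2 * y ^ 24 * α ^ 8 * (y ^ j) ^ 7 * D ^ 5 +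 4 * y ^ 24 * α ^ 8 * (y ^ j) ^ 8 * D ^ 5 - 2 * y ^ 24 * α ^ 8 * (y ^ j) ^ 9 * D ^ 5 - 1 * y ^ 24 * α ^ 9 * (y ^ j) ^ 7 * D ^ 5 + 2 * y ^ 25 * α ^ 7 * (y ^ j) ^ 9 * D ^ 5 + 2 * y ^ 25 * α ^ 8 * (y ^ j) ^ 8 * D ^ 5 - 1 * y ^ 25 * α ^ 8 * (y ^ j) ^ 9 * D ^ 5 + 2 * y ^ 25 * α ^ 9 * (y ^ j) ^ 8 * D ^ 5 + 1 * y ^ 26 * α ^ 7 * (y ^ j) ^ 10 * D ^ 5 + 2 * y ^ 26 * α ^ 8 * (y ^ j) ^ 9 * D ^ 5 + 1 * y ^ 26 * α ^ 9 * (y ^ j) ^ 8 * D ^ 5 - 1 * y ^ 26 * α ^ 9 * (y ^ j) ^ 9 * D ^ 5 - 2 * y ^ 27 * α ^ 8 * (y ^ j) ^ 10 * D ^ 5 - 2 * y ^ 27 * α ^ 9 * (y ^ j) ^ 9 * D ^ 5 + 1 * y ^ 28 * α ^ 9 * (y ^ j) ^ 10 * D ^ 5) * hD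
  · rw [hQj1', hPj', hPj1', hQj2',
      div_add_div _ _ hdP0 hdQ1,
      div_mul_div_comm, div_mul_div_comm,
      div_add_div _ _ hD2 (mul_ne_zero hdQ1 (mul_ne_zero hdP0 hdQ1)),
      div_add_div _ _ (mul_ne_zero hD2 (mul_ne_zero hdQ1 (mul_ne_zero hdP0 hdQ1)))
        (mul_ne_zero hdP1 hdQ2),
      div_eq_div_iff hdQ1
        (mul_ne_zero (mul_ne_zero hD2 (mul_ne_zero hdQ1 (mul_ne_zero hdP0 hdQ1)))
          (mul_ne_zero hdP1 hdQ2))]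
    linear_combination
      (1 * y * α * D ^ 6 - 2 * y ^ 2 * α * D ^ 6 - 2 * y ^ 2 * α * y ^ j * D ^ 6 + 1 * y ^ 3 * α * D ^ 6 + 3 * y ^ 3 * α * y ^ j * D ^ 6 + 1 * y ^ 3 * α * (y ^ j) ^ 2 * D ^ 6 - 3 * y ^ 3 * α ^ 2 * y ^ j * D ^ 6 + 2 * y ^ 4 * α ^ 2 * y ^ j * D ^ 6 + 6 * y ^ 4 * α ^ 2 * (y ^ j) ^ 2 * D ^ 6 - 1 * y ^ 5 * α * y ^ j * D ^ 6 - 3 * y ^ 5 * α * (y ^ j) ^ 2 * D ^ 6 - 1 * y ^ 5 * α * (y ^ j) ^ 3 * D ^ 6 + 4 * y ^ 5 * α ^ 2 * y ^ j * D ^ 6 - 1 * y ^ 5 * α ^ 2 * (y ^ j) ^ 2 * D ^ 6 - 3 * y ^ 5 * α ^ 2 * (y ^ j) ^ 3 * D ^ 6 - 1 * y ^ 5 * α ^ 3 * y ^ j * D ^ 6 + 3 * y ^ 5 * α ^ 3 * (y ^ j) ^ 2 * D ^ 6 + 2 * y ^ 6 * α * (y ^ j) ^ 2 * D ^ 6 +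 2 * y ^ 6 * α * (y ^ j) ^ 3 * D ^ 6 - 2 * y ^ 6 * α ^ 2 * y ^ j * D ^ 6 - 10 * y ^ 6 * α ^ 2 * (y ^ j) ^ 2 * D ^ 6 - 4 * y ^ 6 * α ^ 2 * (y ^ j) ^ 3 * D ^ 6 + 2 * y ^ 6 * α ^ 3 * y ^ j * D ^ 6 + 8 * y ^ 6 * α ^ 3 * (y ^ j) ^ 2 * D ^ 6 - 6 * y ^ 6 * α ^ 3 * (y ^ j) ^ 3 * D ^ 6 - 1 * y ^ 7 * α * (y ^ j) ^ 3 * D ^ 6 - 1 * y ^ 7 * α ^ 2 * y ^ j * D ^ 6 + 8 * y ^ 7 * α ^ 2 * (y ^ j) ^ 3 * D ^ 6 + 3 * y ^ 7 * α ^ 2 * (y ^ j) ^ 4 * D ^ 6 - 1 * y ^ 7 * α ^ 3 * y ^ j * D ^ 6 - 15 * y ^ 7 * α ^ 3 * (y ^ j) ^ 2 * D ^ 6 - 16 * y ^ 7 * α ^ 3 * (y ^ j) ^ 3 * D ^ 6 + 3 * y ^ 7 * α ^ 3 * (y ^ j) ^ 4 * D ^ 6 + 3 * y ^ 7 * α ^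 4 * (y ^ j) ^ 2 * D ^ 6 - 1 * y ^ 7 * α ^ 4 * (y ^ j) ^ 3 * D ^ 6 + 4 * y ^ 8 * α ^ 2 * (y ^ j) ^ 2 * D ^ 6 + 6 * y ^ 8 * α ^ 2 * (y ^ j) ^ 3 * D ^ 6 - 2 * y ^ 8 * α ^ 2 * (y ^ j) ^ 4 * D ^ 6 - 2 * y ^ 8 * α ^ 3 * (y ^ j) ^ 2 * D ^ 6 + 18 * y ^ 8 * α ^ 3 * (y ^ j) ^ 3 * D ^ 6 + 12 * y ^ 8 * α ^ 3 * (y ^ j) ^ 4 * D ^ 6 - 2 * y ^ 8 * α ^ 4 * (y ^ j) ^ 2 * D ^ 6 - 16 * y ^ 8 * α ^ 4 * (y ^ j) ^ 3 * D ^ 6 + 2 * y ^ 8 * α ^ 4 * (y ^ j) ^ 4 * D ^ 6 + 1 * y ^ 9 * α ^ 2 * (y ^ j) ^ 2 * D ^ 6 - 5 * y ^ 9 * α ^ 2 * (y ^ j) ^ 3 * D ^ 6 - 4 * y ^ 9 * α ^ 2 * (y ^ j) ^ 4 * D ^ 6 + 2 * y ^ 9 * α ^ 3 * (y ^ j) ^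 2 * D ^ 6 + 19 * y ^ 9 * α ^ 3 * (y ^ j) ^ 3 * D ^ 6 + 1 * y ^ 9 * α ^ 3 * (y ^ j) ^ 4 * D ^ 6 - 3 * y ^ 9 * α ^ 3 * (y ^ j) ^ 5 * D ^ 6 - 4 * y ^ 9 * α ^ 4 * (y ^ j) ^ 2 * D ^ 6 + 3 * y ^ 9 * α ^ 4 * (y ^ j) ^ 3 * D ^ 6 + 24 * y ^ 9 * α ^ 4 * (y ^ j) ^ 4 * D ^ 6 - 1 * y ^ 9 * α ^ 4 * (y ^ j) ^ 5 * D ^ 6 - 3 * y ^ 9 * α ^ 5 * (y ^ j) ^ 3 * D ^ 6 - 2 * y ^ 10 * α ^ 2 * (y ^ j) ^ 3 * D ^ 6 + 2 * y ^ 10 * α ^ 2 * (y ^ j) ^ 4 * D ^ 6 + 4 * y ^ 10 * α ^ 3 * (y ^ j) ^ 2 * D ^ 6 - 2 * y ^ 10 * α ^ 3 * (y ^ j) ^ 3 * D ^ 6 - 28 * y ^ 10 * α ^ 3 * (y ^ j) ^ 4 * D ^ 6 - 6 * y ^ 10 * α ^ 3 * (y ^ j) ^ 5 * D ^ 6 +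 2 * y ^ 10 * α ^ 4 * (y ^ j) ^ 2 * D ^ 6 + 24 * y ^ 10 * α ^ 4 * (y ^ j) ^ 3 * D ^ 6 + 10 * y ^ 10 * α ^ 4 * (y ^ j) ^ 4 * D ^ 6 - 12 * y ^ 10 * α ^ 4 * (y ^ j) ^ 5 * D ^ 6 - 6 * y ^ 10 * α ^ 5 * (y ^ j) ^ 3 * D ^ 6 + 10 * y ^ 10 * α ^ 5 * (y ^ j) ^ 4 * D ^ 6 + 1 * y ^ 11 * α ^ 2 * (y ^ j) ^ 4 * D ^ 6 - 9 * y ^ 11 * α ^ 3 * (y ^ j) ^ 3 * D ^ 6 - 2 * y ^ 11 * α ^ 3 * (y ^ j) ^ 4 * D ^ 6 + 12 * y ^ 11 * α ^ 3 * (y ^ j) ^ 5 * D ^ 6 + 1 * y ^ 11 * α ^ 4 * (y ^ j) ^ 2 * D ^ 6 + 5 * y ^ 11 * α ^ 4 * (y ^ j) ^ 3 * D ^ 6 - 38 * y ^ 11 * α ^ 4 * (y ^ j) ^ 4 * D ^ 6 - 21 * y ^ 11 * α ^ 4 * (y ^ j) ^ 5 * D ^ 6 + 1 * y ^ 11 *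 α ^ 4 * (y ^ j) ^ 6 * D ^ 6 + 12 * y ^ 11 * α ^ 5 * (y ^ j) ^ 3 * D ^ 6 + 26 * y ^ 11 * α ^ 5 * (y ^ j) ^ 4 * D ^ 6 - 11 * y ^ 11 * α ^ 5 * (y ^ j) ^ 5 * D ^ 6 + 1 * y ^ 11 * α ^ 6 * (y ^ j) ^ 4 * D ^ 6 - 4 * y ^ 12 * α ^ 3 * (y ^ j) ^ 3 * D ^ 6 + 6 * y ^ 12 * α ^ 3 * (y ^ j) ^ 4 * D ^ 6 + 2 * y ^ 12 * α ^ 3 * (y ^ j) ^ 5 * D ^ 6 - 8 * y ^ 12 * α ^ 4 * (y ^ j) ^ 3 * D ^ 6 - 30 * y ^ 12 * α ^ 4 * (y ^ j) ^ 4 * D ^ 6 + 20 * y ^ 12 * α ^ 4 * (y ^ j) ^ 5 * D ^ 6 + 10 * y ^ 12 * α ^ 4 * (y ^ j) ^ 6 * D ^ 6 + 2 * y ^ 12 * α ^ 5 * (y ^ j) ^ 3 * D ^ 6 - 28 * y ^ 12 * α ^ 5 * (y ^ j) ^ 4 * D ^ 6 - 38 * y ^ 12 * α ^ 5 * (y ^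 j) ^ 5 * D ^ 6 + 4 * y ^ 12 * α ^ 5 * (y ^ j) ^ 6 * D ^ 6 + 10 * y ^ 12 * α ^ 6 * (y ^ j) ^ 4 * D ^ 6 - 2 * y ^ 12 * α ^ 6 * (y ^ j) ^ 5 * D ^ 6 + 8 * y ^ 13 * α ^ 3 * (y ^ j) ^ 4 * D ^ 6 - 1 * y ^ 13 * α ^ 3 * (y ^ j) ^ 5 * D ^ 6 - 7 * y ^ 13 * α ^ 4 * (y ^ j) ^ 3 * D ^ 6 + 8 * y ^ 13 * α ^ 4 * (y ^ j) ^ 4 * D ^ 6 + 37 * y ^ 13 * α ^ 4 * (y ^ j) ^ 5 * D ^ 6 - 2 * y ^ 13 * α ^ 4 * (y ^ j) ^ 6 * D ^ 6 - 1 * y ^ 13 * α ^ 5 * (y ^ j) ^ 3 * D ^ 6 - 26 * y ^ 13 * α ^ 5 * (y ^ j) ^ 4 * D ^ 6 + 9 * y ^ 13 * α ^ 5 * (y ^ j) ^ 5 * D ^ 6 + 22 * y ^ 13 * α ^ 5 * (y ^ j) ^ 6 * D ^ 6 - 2 * y ^ 13 * α ^ 6 * (y ^ j) ^ 4 * D ^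 6 - 27 * y ^ 13 * α ^ 6 * (y ^ j) ^ 5 * D ^ 6 + 1 * y ^ 13 * α ^ 6 * (y ^ j) ^ 6 * D ^ 6 - 4 * y ^ 14 * α ^ 3 * (y ^ j) ^ 5 * D ^ 6 + 18 * y ^ 14 * α ^ 4 * (y ^ j) ^ 4 * D ^ 6 + 4 * y ^ 14 * α ^ 4 * (y ^ j) ^ 5 * D ^ 6 - 14 * y ^ 14 * α ^ 4 * (y ^ j) ^ 6 * D ^ 6 - 4 * y ^ 14 * α ^ 5 * (y ^ j) ^ 3 * D ^ 6 - 10 * y ^ 14 * α ^ 5 * (y ^ j) ^ 4 * D ^ 6 + 56 * y ^ 14 * α ^ 5 * (y ^ j) ^ 5 * D ^ 6 + 18 * y ^ 14 * α ^ 5 * (y ^ j) ^ 6 * D ^ 6 - 4 * y ^ 14 * α ^ 5 * (y ^ j) ^ 7 * D ^ 6 - 14 * y ^ 14 * α ^ 6 * (y ^ j) ^ 4 * D ^ 6 - 10 * y ^ 14 * α ^ 6 * (y ^ j) ^ 5 * D ^ 6 + 24 * y ^ 14 * α ^ 6 * (y ^ j) ^ 6 * D ^ 6 - 4 * y ^ 14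 * α ^ 7 * (y ^ j) ^ 5 * D ^ 6 + 6 * y ^ 15 * α ^ 4 * (y ^ j) ^ 4 * D ^ 6 - 15 * y ^ 15 * α ^ 4 * (y ^ j) ^ 5 * D ^ 6 - 5 * y ^ 15 * α ^ 4 * (y ^ j) ^ 6 * D ^ 6 + 20 * y ^ 15 * α ^ 5 * (y ^ j) ^ 4 * D ^ 6 + 33 * y ^ 15 * α ^ 5 * (y ^ j) ^ 5 * D ^ 6 - 42 * y ^ 15 * α ^ 5 * (y ^ j) ^ 6 * D ^ 6 - 11 * y ^ 15 * α ^ 5 * (y ^ j) ^ 7 * D ^ 6 - 5 * y ^ 15 * α ^ 6 * (y ^ j) ^ 4 * D ^ 6 + 35 * y ^ 15 * α ^ 6 * (y ^ j) ^ 5 * D ^ 6 + 32 * y ^ 15 * α ^ 6 * (y ^ j) ^ 6 * D ^ 6 - 7 * y ^ 15 * α ^ 6 * (y ^ j) ^ 7 * D ^ 6 - 11 * y ^ 15 * α ^ 7 * (y ^ j) ^ 5 * D ^ 6 + 8 * y ^ 15 * α ^ 7 * (y ^ j) ^ 6 * D ^ 6 - 12 * y ^ 16 * α ^ 4 * (y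 ^ j) ^ 5 * D ^ 6 + 4 * y ^ 16 * α ^ 4 * (y ^ j) ^ 6 * D ^ 6 + 8 * y ^ 16 * α ^ 5 * (y ^ j) ^ 4 * D ^ 6 - 18 * y ^ 16 * α ^ 5 * (y ^ j) ^ 5 * D ^ 6 - 32 * y ^ 16 * α ^ 5 * (y ^ j) ^ 6 * D ^ 6 + 10 * y ^ 16 * α ^ 5 * (y ^ j) ^ 7 * D ^ 6 + 4 * y ^ 16 * α ^ 6 * (y ^ j) ^ 4 * D ^ 6 + 38 * y ^ 16 * α ^ 6 * (y ^ j) ^ 5 * D ^ 6 - 24 * y ^ 16 * α ^ 6 * (y ^ j) ^ 6 * D ^ 6 - 26 * y ^ 16 * α ^ 6 * (y ^ j) ^ 7 * D ^ 6 + 10 * y ^ 16 * α ^ 7 * (y ^ j) ^ 5 * D ^ 6 + 30 * y ^ 16 * α ^ 7 * (y ^ j) ^ 6 * D ^ 6 - 4 * y ^ 16 * α ^ 7 * (y ^ j) ^ 7 * D ^ 6 + 6 * y ^ 17 * α ^ 4 * (y ^ j) ^ 6 * D ^ 6 - 27 * y ^ 17 * α ^ 5 * (y ^ j) ^ 5 *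 D ^ 6 - 8 * y ^ 17 * α ^ 5 * (y ^ j) ^ 6 * D ^ 6 + 10 * y ^ 17 * α ^ 5 * (y ^ j) ^ 7 * D ^ 6 + 6 * y ^ 17 * α ^ 6 * (y ^ j) ^ 4 * D ^ 6 - 1 * y ^ 17 * α ^ 6 * (y ^ j) ^ 5 * D ^ 6 - 66 * y ^ 17 * α ^ 6 * (y ^ j) ^ 6 * D ^ 6 - 1 * y ^ 17 * α ^ 6 * (y ^ j) ^ 7 * D ^ 6 + 6 * y ^ 17 * α ^ 6 * (y ^ j) ^ 8 * D ^ 6 + 10 * y ^ 17 * α ^ 7 * (y ^ j) ^ 5 * D ^ 6 - 8 * y ^ 17 * α ^ 7 * (y ^ j) ^ 6 * D ^ 6 - 27 * y ^ 17 * α ^ 7 * (y ^ j) ^ 7 * D ^ 6 + 6 * y ^ 17 * α ^ 8 * (y ^ j) ^ 6 * D ^ 6 - 4 * y ^ 18 * α ^ 5 * (y ^ j) ^ 5 * D ^ 6 + 30 * y ^ 18 * α ^ 5 * (y ^ j) ^ 6 * D ^ 6 + 10 * y ^ 18 * α ^ 5 * (y ^ j) ^ 7 * D ^ 6 - 26 *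 y ^ 18 * α ^ 6 * (y ^ j) ^ 5 * D ^ 6 - 24 * y ^ 18 * α ^ 6 * (y ^ j) ^ 6 * D ^ 6 + 38 * y ^ 18 * α ^ 6 * (y ^ j) ^ 7 * D ^ 6 + 4 * y ^ 18 * α ^ 6 * (y ^ j) ^ 8 * D ^ 6 + 10 * y ^ 18 * α ^ 7 * (y ^ j) ^ 5 * D ^ 6 - 32 * y ^ 18 * α ^ 7 * (y ^ j) ^ 6 * D ^ 6 - 18 * y ^ 18 * α ^ 7 * (y ^ j) ^ 7 * D ^ 6 + 8 * y ^ 18 * α ^ 7 * (y ^ j) ^ 8 * D ^ 6 + 4 * y ^ 18 * α ^ 8 * (y ^ j) ^ 6 * D ^ 6 - 12 * y ^ 18 * α ^ 8 * (y ^ j) ^ 7 * D ^ 6 + 8 * y ^ 19 * α ^ 5 * (y ^ j) ^ 6 * D ^ 6 - 11 * y ^ 19 * α ^ 5 * (y ^ j) ^ 7 * D ^ 6 - 7 * y ^ 19 * α ^ 6 * (y ^ j) ^ 5 * D ^ 6 + 32 * y ^ 19 * α ^ 6 * (y ^ j) ^ 6 * D ^ 6 + 35 * y ^ 19 * α ^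 6 * (y ^ j) ^ 7 * D ^ 6 - 5 * y ^ 19 * α ^ 6 * (y ^ j) ^ 8 * D ^ 6 - 11 * y ^ 19 * α ^ 7 * (y ^ j) ^ 5 * D ^ 6 - 42 * y ^ 19 * α ^ 7 * (y ^ j) ^ 6 * D ^ 6 + 33 * y ^ 19 * α ^ 7 * (y ^ j) ^ 7 * D ^ 6 + 20 * y ^ 19 * α ^ 7 * (y ^ j) ^ 8 * D ^ 6 - 5 * y ^ 19 * α ^ 8 * (y ^ j) ^ 6 * D ^ 6 - 15 * y ^ 19 * α ^ 8 * (y ^ j) ^ 7 * D ^ 6 + 6 * y ^ 19 * α ^ 8 * (y ^ j) ^ 8 * D ^ 6 - 4 * y ^ 20 * α ^ 5 * (y ^ j) ^ 7 * D ^ 6 + 24 * y ^ 20 * α ^ 6 * (y ^ j) ^ 6 * D ^ 6 - 10 * y ^ 20 * α ^ 6 * (y ^ j) ^ 7 * D ^ 6 - 14 * y ^ 20 * α ^ 6 * (y ^ j) ^ 8 * D ^ 6 - 4 * y ^ 20 * α ^ 7 * (y ^ j) ^ 5 * D ^ 6 + 18 * y ^ 20 * α ^ 7 * (y ^ j) ^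 6 * D ^ 6 + 56 * y ^ 20 * α ^ 7 * (y ^ j) ^ 7 * D ^ 6 - 10 * y ^ 20 * α ^ 7 * (y ^ j) ^ 8 * D ^ 6 - 4 * y ^ 20 * α ^ 7 * (y ^ j) ^ 9 * D ^ 6 - 14 * y ^ 20 * α ^ 8 * (y ^ j) ^ 6 * D ^ 6 + 4 * y ^ 20 * α ^ 8 * (y ^ j) ^ 7 * D ^ 6 + 18 * y ^ 20 * α ^ 8 * (y ^ j) ^ 8 * D ^ 6 - 4 * y ^ 20 * α ^ 9 * (y ^ j) ^ 7 * D ^ 6 + 1 * y ^ 21 * α ^ 6 * (y ^ j) ^ 6 * D ^ 6 - 27 * y ^ 21 * α ^ 6 * (y ^ j) ^ 7 * D ^ 6 - 2 * y ^ 21 * α ^ 6 * (y ^ j) ^ 8 * D ^ 6 + 22 * y ^ 21 * α ^ 7 * (y ^ j) ^ 6 * D ^ 6 + 9 * y ^ 21 * α ^ 7 * (y ^ j) ^ 7 * D ^ 6 - 26 * y ^ 21 * α ^ 7 * (y ^ j) ^ 8 * D ^ 6 - 1 * y ^ 21 * α ^ 7 * (y ^ j) ^ 9 * D ^ 6 -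 2 * y ^ 21 * α ^ 8 * (y ^ j) ^ 6 * D ^ 6 + 37 * y ^ 21 * α ^ 8 * (y ^ j) ^ 7 * D ^ 6 + 8 * y ^ 21 * α ^ 8 * (y ^ j) ^ 8 * D ^ 6 - 7 * y ^ 21 * α ^ 8 * (y ^ j) ^ 9 * D ^ 6 - 1 * y ^ 21 * α ^ 9 * (y ^ j) ^ 7 * D ^ 6 + 8 * y ^ 21 * α ^ 9 * (y ^ j) ^ 8 * D ^ 6 - 2 * y ^ 22 * α ^ 6 * (y ^ j) ^ 7 * D ^ 6 + 10 * y ^ 22 * α ^ 6 * (y ^ j) ^ 8 * D ^ 6 + 4 * y ^ 22 * α ^ 7 * (y ^ j) ^ 6 * D ^ 6 - 38 * y ^ 22 * α ^ 7 * (y ^ j) ^ 7 * D ^ 6 - 28 * y ^ 22 * α ^ 7 * (y ^ j) ^ 8 * D ^ 6 + 2 * y ^ 22 * α ^ 7 * (y ^ j) ^ 9 * D ^ 6 + 10 * y ^ 22 * α ^ 8 * (y ^ j) ^ 6 * D ^ 6 + 20 * y ^ 22 * α ^ 8 * (y ^ j) ^ 7 * D ^ 6 - 30 * y ^ 22 *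 α ^ 8 * (y ^ j) ^ 8 * D ^ 6 - 8 * y ^ 22 * α ^ 8 * (y ^ j) ^ 9 * D ^ 6 + 2 * y ^ 22 * α ^ 9 * (y ^ j) ^ 7 * D ^ 6 + 6 * y ^ 22 * α ^ 9 * (y ^ j) ^ 8 * D ^ 6 - 4 * y ^ 22 * α ^ 9 * (y ^ j) ^ 9 * D ^ 6 + 1 * y ^ 23 * α ^ 6 * (y ^ j) ^ 8 * D ^ 6 - 11 * y ^ 23 * α ^ 7 * (y ^ j) ^ 7 * D ^ 6 + 26 * y ^ 23 * α ^ 7 * (y ^ j) ^ 8 * D ^ 6 + 12 * y ^ 23 * α ^ 7 * (y ^ j) ^ 9 * D ^ 6 + 1 * y ^ 23 * α ^ 8 * (y ^ j) ^ 6 * D ^ 6 - 21 * y ^ 23 * α ^ 8 * (y ^ j) ^ 7 * D ^ 6 - 38 * y ^ 23 * α ^ 8 * (y ^ j) ^ 8 * D ^ 6 + 5 * y ^ 23 * α ^ 8 * (y ^ j) ^ 9 * D ^ 6 + 1 * y ^ 23 * α ^ 8 * (y ^ j) ^ 10 * D ^ 6 + 12 * y ^ 23 * α ^ 9 * (y ^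 j) ^ 7 * D ^ 6 - 2 * y ^ 23 * α ^ 9 * (y ^ j) ^ 8 * D ^ 6 - 9 * y ^ 23 * α ^ 9 * (y ^ j) ^ 9 * D ^ 6 + 1 * y ^ 23 * α ^ 10 * (y ^ j) ^ 8 * D ^ 6 + 10 * y ^ 24 * α ^ 7 * (y ^ j) ^ 8 * D ^ 6 - 6 * y ^ 24 * α ^ 7 * (y ^ j) ^ 9 * D ^ 6 - 12 * y ^ 24 * α ^ 8 * (y ^ j) ^ 7 * D ^ 6 + 10 * y ^ 24 * α ^ 8 * (y ^ j) ^ 8 * D ^ 6 + 24 * y ^ 24 * α ^ 8 * (y ^ j) ^ 9 * D ^ 6 + 2 * y ^ 24 * α ^ 8 * (y ^ j) ^ 10 * D ^ 6 - 6 * y ^ 24 * α ^ 9 * (y ^ j) ^ 7 * D ^ 6 - 28 * y ^ 24 * α ^ 9 * (y ^ j) ^ 8 * D ^ 6 - 2 * y ^ 24 * α ^ 9 * (y ^ j) ^ 9 * D ^ 6 + 4 * y ^ 24 * α ^ 9 * (y ^ j) ^ 10 * D ^ 6 + 2 * y ^ 24 * α ^ 10 * (y ^ j) ^ 8 * D ^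 6 - 2 * y ^ 24 * α ^ 10 * (y ^ j) ^ 9 * D ^ 6 - 3 * y ^ 25 * α ^ 7 * (y ^ j) ^ 9 * D ^ 6 - 1 * y ^ 25 * α ^ 8 * (y ^ j) ^ 7 * D ^ 6 + 24 * y ^ 25 * α ^ 8 * (y ^ j) ^ 8 * D ^ 6 + 3 * y ^ 25 * α ^ 8 * (y ^ j) ^ 9 * D ^ 6 - 4 * y ^ 25 * α ^ 8 * (y ^ j) ^ 10 * D ^ 6 - 3 * y ^ 25 * α ^ 9 * (y ^ j) ^ 7 * D ^ 6 + 1 * y ^ 25 * α ^ 9 * (y ^ j) ^ 8 * D ^ 6 + 19 * y ^ 25 * α ^ 9 * (y ^ j) ^ 9 * D ^ 6 + 2 * y ^ 25 * α ^ 9 * (y ^ j) ^ 10 * D ^ 6 - 4 * y ^ 25 * α ^ 10 * (y ^ j) ^ 8 * D ^ 6 - 5 * y ^ 25 * α ^ 10 * (y ^ j) ^ 9 * D ^ 6 + 1 * y ^ 25 * α ^ 10 * (y ^ j) ^ 10 * D ^ 6 + 2 * y ^ 26 * α ^ 8 * (y ^ j) ^ 8 * D ^ 6 - 16 * y ^ 26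 * α ^ 8 * (y ^ j) ^ 9 * D ^ 6 - 2 * y ^ 26 * α ^ 8 * (y ^ j) ^ 10 * D ^ 6 + 12 * y ^ 26 * α ^ 9 * (y ^ j) ^ 8 * D ^ 6 + 18 * y ^ 26 * α ^ 9 * (y ^ j) ^ 9 * D ^ 6 - 2 * y ^ 26 * α ^ 9 * (y ^ j) ^ 10 * D ^ 6 - 2 * y ^ 26 * α ^ 10 * (y ^ j) ^ 8 * D ^ 6 + 6 * y ^ 26 * α ^ 10 * (y ^ j) ^ 9 * D ^ 6 + 4 * y ^ 26 * α ^ 10 * (y ^ j) ^ 10 * D ^ 6 - 1 * y ^ 27 * α ^ 8 * (y ^ j) ^ 9 * D ^ 6 + 3 * y ^ 27 * α ^ 8 * (y ^ j) ^ 10 * D ^ 6 + 3 * y ^ 27 * α ^ 9 * (y ^ j) ^ 8 * D ^ 6 - 16 * y ^ 27 * α ^ 9 * (y ^ j) ^ 9 * D ^ 6 - 15 * y ^ 27 * α ^ 9 * (y ^ j) ^ 10 * D ^ 6 - 1 * y ^ 27 * α ^ 9 * (y ^ j) ^ 11 * D ^ 6 + 3 * y ^ 27 * α ^ 10 * (y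 ^ j) ^ 8 * D ^ 6 + 8 * y ^ 27 * α ^ 10 * (y ^ j) ^ 9 * D ^ 6 - 1 * y ^ 27 * α ^ 10 * (y ^ j) ^ 11 * D ^ 6 - 1 * y ^ 27 * α ^ 11 * (y ^ j) ^ 9 * D ^ 6 - 6 * y ^ 28 * α ^ 9 * (y ^ j) ^ 9 * D ^ 6 + 8 * y ^ 28 * α ^ 9 * (y ^ j) ^ 10 * D ^ 6 + 2 * y ^ 28 * α ^ 9 * (y ^ j) ^ 11 * D ^ 6 - 4 * y ^ 28 * α ^ 10 * (y ^ j) ^ 9 * D ^ 6 - 10 * y ^ 28 * α ^ 10 * (y ^ j) ^ 10 * D ^ 6 - 2 * y ^ 28 * α ^ 10 * (y ^ j) ^ 11 * D ^ 6 + 2 * y ^ 28 * α ^ 11 * (y ^ j) ^ 9 * D ^ 6 + 2 * y ^ 28 * α ^ 11 * (y ^ j) ^ 10 * D ^ 6 + 3 * y ^ 29 * α ^ 9 * (y ^ j) ^ 10 * D ^ 6 - 1 * y ^ 29 * α ^ 9 * (y ^ j) ^ 11 * D ^ 6 - 3 * y ^ 29 * α ^ 10 * (y ^ j) ^ 9 *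 D ^ 6 - 1 * y ^ 29 * α ^ 10 * (y ^ j) ^ 10 * D ^ 6 + 4 * y ^ 29 * α ^ 10 * (y ^ j) ^ 11 * D ^ 6 - 1 * y ^ 29 * α ^ 11 * (y ^ j) ^ 9 * D ^ 6 - 3 * y ^ 29 * α ^ 11 * (y ^ j) ^ 10 * D ^ 6 - 1 * y ^ 29 * α ^ 11 * (y ^ j) ^ 11 * D ^ 6 + 6 * y ^ 30 * α ^ 10 * (y ^ j) ^ 10 * D ^ 6 + 2 * y ^ 30 * α ^ 10 * (y ^ j) ^ 11 * D ^ 6 - 3 * y ^ 31 * α ^ 10 * (y ^ j) ^ 11 * D ^ 6 + 1 * y ^ 31 * α ^ 11 * (y ^ j) ^ 10 * D ^ 6 + 3 * y ^ 31 * α ^ 11 * (y ^ j) ^ 11 * D ^ 6 + 1 * y ^ 31 * α ^ 11 * (y ^ j) ^ 12 * D ^ 6 - 2 * y ^ 32 * α ^ 11 * (y ^ j) ^ 11 * D ^ 6 - 2 * y ^ 32 * α ^ 11 * (y ^ j) ^ 12 * D ^ 6 + 1 * y ^ 33 * α ^ 11 * (y ^ j) ^ 12 * D ^ 6) * hD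
end

section
/- Let P, Q be elements of a commutative ring and define Ẑ_n(P,Q) as the weight-sum over Dyck-type paths of length 2n (steps ±1, from 0 to 0, staying ≥ 0) where a down-step gets weight Q if it follows an up-step and weight P if it follows a down-step; and define Z_n(P,Q) as the weight-sum over the same paths where down-steps alternately get weights depending only on the parity of the starting height: a down-step from an even height gets weight P and from an odd height gets weight Q. Then Ẑ_n(P,Q) = Z_n(P,Q) for all n ≥ 0, since both generating functions satisfy Z = 1/(1 - z(Q-P) - zP·Z), equivalently Z = 1/(1 - zQ/(1 - zP·Z)), with Z(0) = 1. -/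
/-!
Both weight-sums are sums over binary trees, via the first-return decomposition
`U A D B ↔ A △ B` (Mathlib's `DyckWord.equivTree`). In the first model the down-step closing
the first return weighs `Q` if `A` is empty and `P` otherwise, and all other weights are computed
inside `A` and `B`, so `Ẑ = 1 + z(Q - P)Ẑ + zPẐ²`. In the second model `A` starts one level
higher, which exchanges `P` and `Q`: `Z_{P,Q} = 1 + zQ Z_{Q,P} Z_{P,Q}`. Eliminating `Z_{Q,P}`
gives the same quadratic equation for `Z_{P,Q}`, and two solutions `f, g` of it agree because
`(f - g)(1 - z(Q - P) - zP(f + g)) = 0` and the second factor is a unit.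
-/

open PowerSeries

def hatWeight {R : Type*} [CommRing R] (P Q : R) (s : List Bool) : R :=
  ((s.zip s.tail).map (fun p => pairWeight P Q p.1 p.2)).prod

/-- `Ẑ_n(P,Q)`: weight-sum in the first model over Dyck-type paths of length `2n`. -/
def Zhat {R : Type*} [CommRing R] (P Q : R) (n : ℕ) : R :=
  ∑ f ∈ Finset.univ.filter (fun f : Fin (2 * n) → Bool => IsDyck (List.ofFn f)),
    hatWeight P Q (List.ofFn f)

/-- second model: a down-step from an even height has weight `P`,
from an odd height weight `Q`; `h` is the current height. -/
def parityWeight {R : Type*} [CommRing R] (P Q : R) : ℤ → List Bool → R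
  | _, [] => 1
  | h, true :: s => parityWeight P Q (h + 1) s
  | h, false :: s => (if Even h then P else Q) * parityWeight P Q (h - 1) s

/-- `Z_n(P,Q)`: weight-sum in the second (parity/bicolored) model over
Dyck-type paths of length `2n`, starting at height `0`. -/
def Zpar {R : Type*} [CommRing R] (P Q : R) (n : ℕ) : R :=
  ∑ f ∈ Finset.univ.filter (fun f : Fin (2 * n) → Bool => IsDyck (List.ofFn f)),
    parityWeight P Q 0 (List.ofFn f)

open BinaryTree

section DyckPaths

open Finset

def DyckStep.ofBool (b : Bool) : DyckStep := cond b .U .D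

lemma DyckStep.ofBool_injective : Function.Injective DyckStep.ofBool := by decide

lemma pathSum_eq_count_sub_count (s : List Bool) :
    pathSum s = s.count true - s.count false := by
  induction s with
  | nil => rfl
  | cons b s ih =>
    cases b <;> simp [pathSum, stepVal] at ih ⊢ <;> omega

lemma isDyck_iff_count {s : List Bool} :
    IsDyck s ↔ s.count true = s.count false ∧
      ∀ k, (s.take k).count false ≤ (s.take k).count true := by
  simp only [IsDyck, pathSum_eq_count_sub_count, Finset.mem_range, sub_eq_zero, sub_nonneg,
    Nat.cast_inj, Nat.cast_le]
  refine ⟨fun ⟨heq, hle⟩ => ⟨heq, fun k => ?_⟩, fun ⟨heq, hle⟩ => ⟨heq, fun k _ => hle k⟩⟩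
  rcases le_or_gt k s.length with hk | hk
  · exact hle k (Nat.lt_succ_of_le hk)
  · rw [List.take_of_length_le hk.le, heq]

lemma isDyck_iff_exists_dyckWord {s : List Bool} :
    IsDyck s ↔ ∃ p : DyckWord, p.toList = s.map DyckStep.ofBool := by
  have hcount (b : Bool) (l : List Bool) :
      (l.map DyckStep.ofBool).count (.ofBool b) = l.count b :=
    List.count_map_of_injective _ _ DyckStep.ofBool_injective b
  rw [isDyck_iff_count]
  constructor
  · rintro ⟨heq, hle⟩
    refine ⟨⟨s.map DyckStep.ofBool, ?_, fun k => ?_⟩, rfl⟩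
    · exact (hcount true s).trans (heq.trans (hcount false s).symm)
    · rw [← List.map_take]
      exact (hcount false _).trans_le ((hle k).trans (hcount true _).ge)
  · rintro ⟨p, hp⟩
    refine ⟨?_, fun k => ?_⟩
    · rw [← hcount true, ← hcount false, ← hp]
      exact p.count_U_eq_count_D
    · rw [← hcount true, ← hcount false, List.map_take, ← hp]
      exact p.count_D_le_count_U k

def dyckPath : BinaryTree Unit → List Bool
  | nil => []
  | node _ l r => true :: dyckPath l ++ false :: dyckPath r

lemma map_ofBool_dyckPath (t : BinaryTree Unit) :
    (dyckPath t).map DyckStep.ofBool = (DyckWord.ofTree t).toList := by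
  induction t with
  | nil => rfl
  | node _ l r ihl ihr =>
    change _ = [DyckStep.U] ++ (DyckWord.ofTree l).toList ++ [DyckStep.D] ++
      (DyckWord.ofTree r).toList
    simp [dyckPath, DyckStep.ofBool, ihl, ihr]

lemma length_dyckPath (t : BinaryTree Unit) : (dyckPath t).length = 2 * t.numNodes := by
  induction t with
  | nil => rfl
  | node _ l r ihl ihr =>
    simp only [dyckPath, numNodes, List.length_cons, List.length_append, ihl, ihr]
    ring

lemma dyckPath_node_eq_append_false (l r : BinaryTree Unit) :
    ∃ s, dyckPath (l △ r) = s ++ [false] := by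
  induction r generalizing l with
  | nil => exact ⟨true :: dyckPath l, by simp [dyckPath]⟩
  | node u a b _ ihb =>
    cases u
    obtain ⟨s, hs⟩ := ihb a
    exact ⟨true :: dyckPath l ++ false :: s, by rw [dyckPath, hs]; simp⟩

lemma isDyck_dyckPath (t : BinaryTree Unit) : IsDyck (dyckPath t) :=
  isDyck_iff_exists_dyckWord.2 ⟨_, (map_ofBool_dyckPath t).symm⟩

lemma dyckPath_injective : Function.Injective dyckPath := fun t t' h => by
  have hmap := congrArg (List.map DyckStep.ofBool) h
  rw [map_ofBool_dyckPath, map_ofBool_dyckPath] at hmap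
  rw [← DyckWord.toTree_ofTree t, ← DyckWord.toTree_ofTree t', DyckWord.ext hmap]

lemma IsDyck.exists_dyckPath_eq {s : List Bool} (hs : IsDyck s) : ∃ t, dyckPath t = s := by
  obtain ⟨p, hp⟩ := isDyck_iff_exists_dyckWord.1 hs
  refine ⟨p.toTree, (List.map_injective_iff.2 DyckStep.ofBool_injective) ?_⟩
  rw [map_ofBool_dyckPath, DyckWord.ofTree_toTree, hp]

lemma image_ofFn_filter_isDyck (n : ℕ) :
    (univ.filter fun f : Fin (2 * n) → Bool => IsDyck (List.ofFn f)).image List.ofFn =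
      (treesOfNumNodesEq n).image dyckPath := by
  ext s
  simp only [mem_image, mem_filter, mem_univ, true_and, mem_treesOfNumNodesEq]
  constructor
  · rintro ⟨f, hf, rfl⟩
    obtain ⟨t, ht⟩ := hf.exists_dyckPath_eq
    refine ⟨t, ?_, ht⟩
    simpa [length_dyckPath] using congrArg List.length ht
  · rintro ⟨t, rfl, rfl⟩
    have hofFn :
        List.ofFn (fun i : Fin (2 * t.numNodes) => (dyckPath t).getD i false) = dyckPath t :=
      List.ext_getElem (by simp [length_dyckPath]) fun i _ h => by
        simp [List.getElem?_eq_getElem h]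
    exact ⟨_, by rw [hofFn]; exact isDyck_dyckPath t, hofFn⟩

theorem sum_filter_isDyck_ofFn {M : Type*} [AddCommMonoid M] (w : List Bool → M) (n : ℕ) :
    ∑ f ∈ univ.filter (fun f : Fin (2 * n) → Bool => IsDyck (List.ofFn f)), w (List.ofFn f) =
      ∑ t ∈ treesOfNumNodesEq n, w (dyckPath t) := by
  rw [← sum_image List.ofFn_injective.injOn, image_ofFn_filter_isDyck,
    sum_image dyckPath_injective.injOn]

theorem BinaryTree.sum_treesOfNumNodesEq_succ {M : Type*} [AddCommMonoid M]
    (w : BinaryTree Unit → M) (n : ℕ) :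
    ∑ t ∈ treesOfNumNodesEq (n + 1), w t =
      ∑ ij ∈ antidiagonal n, ∑ l ∈ treesOfNumNodesEq ij.1, ∑ r ∈ treesOfNumNodesEq ij.2,
        w (l △ r) := by
  rw [treesOfNumNodesEq_succ, sum_biUnion]
  · simp_rw [sum_map, sum_product]
    rfl
  · simp_rw [Set.PairwiseDisjoint, Set.Pairwise, Function.onFun, disjoint_left]
    aesop

end DyckPaths

section Weights

variable {R : Type*} [CommRing R] (P Q : R)

@[simp] lemma hatWeight_nil : hatWeight P Q [] = 1 := rfl

@[simp] lemma hatWeight_singleton (x : Bool) : hatWeight P Q [x] = 1 := rfl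

lemma hatWeight_cons_cons (x y : Bool) (l : List Bool) :
    hatWeight P Q (x :: y :: l) = pairWeight P Q x y * hatWeight P Q (y :: l) := by
  simp [hatWeight]

lemma hatWeight_append_cons_cons (s : List Bool) (x y : Bool) (l : List Bool) :
    hatWeight P Q (s ++ x :: y :: l) =
      hatWeight P Q (s ++ [x]) * pairWeight P Q x y * hatWeight P Q (y :: l) := by
  induction s with
  | nil => simp [hatWeight_cons_cons]
  | cons a s ih =>
    cases s with
    | nil => simp [hatWeight_cons_cons, mul_assoc]
    | cons b s => simp only [List.cons_append, hatWeight_cons_cons] at ih ⊢; rw [ih]; ring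

lemma hatWeight_cons_dyckPath (x : Bool) (t : BinaryTree Unit) :
    hatWeight P Q (x :: dyckPath t) = hatWeight P Q (dyckPath t) := by
  cases t with
  | nil => rfl
  | node _ l r => simp [dyckPath, hatWeight_cons_cons, pairWeight]

lemma hatWeight_dyckPath_node (l r : BinaryTree Unit) :
    hatWeight P Q (dyckPath (l △ r)) =
      (if l = nil then Q else P) * hatWeight P Q (dyckPath l) * hatWeight P Q (dyckPath r) := by
  cases l with
  | nil =>
    simp [dyckPath, hatWeight_cons_cons, hatWeight_cons_dyckPath, pairWeight]
  | node u a b =>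
    cases u
    obtain ⟨s, hs⟩ := dyckPath_node_eq_append_false a b
    have hsplit : dyckPath ((a △ b) △ r) = (true :: s) ++ false :: false :: dyckPath r := by
      rw [dyckPath, hs]; simp
    rw [hsplit, hatWeight_append_cons_cons, List.cons_append, ← hs, hatWeight_cons_dyckPath,
      hatWeight_cons_dyckPath]
    simp [pairWeight, mul_comm]

lemma parityWeight_add_one (s : List Bool) (h : ℤ) :
    parityWeight P Q (h + 1) s = parityWeight Q P h s := by
  induction s generalizing h with
  | nil => rfl
  | cons b s ih =>
    cases b with
    | true => simp only [parityWeight, ih]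
    | false =>
      simp only [parityWeight, add_sub_right_comm, ih, Int.even_add_one]
      split_ifs <;> rfl

lemma parityWeight_dyckPath_append (t : BinaryTree Unit) (h : ℤ) (s : List Bool) :
    parityWeight P Q h (dyckPath t ++ s) =
      parityWeight P Q h (dyckPath t) * parityWeight P Q h s := by
  induction t generalizing h s with
  | nil => simp [dyckPath, parityWeight]
  | node _ l r ihl ihr =>
    simp only [dyckPath, List.cons_append, List.append_assoc, parityWeight, ihl, ihr,
      add_sub_cancel_right]
    ring

lemma parityWeight_zero_dyckPath_node (l r : BinaryTree Unit) :
    parityWeight P Q 0 (dyckPath (l △ r)) =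
      Q * parityWeight Q P 0 (dyckPath l) * parityWeight P Q 0 (dyckPath r) := by
  simp only [dyckPath, List.cons_append, parityWeight, parityWeight_dyckPath_append]
  rw [parityWeight_add_one]
  norm_num
  ring

end Weights

section Recurrences

open Finset

variable {R : Type*} [CommRing R] (P Q : R)

lemma Zhat_eq_sum_trees (n : ℕ) :
    Zhat P Q n = ∑ t ∈ treesOfNumNodesEq n, hatWeight P Q (dyckPath t) :=
  sum_filter_isDyck_ofFn _ n

lemma Zpar_eq_sum_trees (n : ℕ) :
    Zpar P Q n = ∑ t ∈ treesOfNumNodesEq n, parityWeight P Q 0 (dyckPath t) :=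
  sum_filter_isDyck_ofFn _ n

@[simp] lemma Zhat_zero : Zhat P Q 0 = 1 := by simp [Zhat_eq_sum_trees, dyckPath]

@[simp] lemma Zpar_zero : Zpar P Q 0 = 1 := by simp [Zpar_eq_sum_trees, dyckPath, parityWeight]

lemma sum_ite_nil_mul_hatWeight (i : ℕ) :
    ∑ l ∈ treesOfNumNodesEq i, (if l = nil then Q else P) * hatWeight P Q (dyckPath l) =
      (if i = 0 then Q - P else 0) + P * Zhat P Q i := by
  have hsplit (l : BinaryTree Unit) :
      (if l = nil then Q else P) = (if l = nil then Q - P else 0) + P := by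
    split_ifs <;> ring
  simp_rw [hsplit, add_mul, sum_add_distrib, ite_mul, zero_mul, sum_ite_eq',
    mem_treesOfNumNodesEq, Zhat_eq_sum_trees, mul_sum]
  simp [dyckPath, eq_comm]

lemma Zhat_succ (n : ℕ) :
    Zhat P Q (n + 1) =
      (Q - P) * Zhat P Q n + P * ∑ ij ∈ antidiagonal n, Zhat P Q ij.1 * Zhat P Q ij.2 := by
  rw [Zhat_eq_sum_trees, sum_treesOfNumNodesEq_succ]
  simp_rw [hatWeight_dyckPath_node, ← sum_mul_sum, sum_ite_nil_mul_hatWeight,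
    ← Zhat_eq_sum_trees, add_mul, sum_add_distrib, mul_assoc, ← mul_sum]
  congr 1
  rw [sum_eq_single_of_mem (0, n) (by simp)]
  · simp
  · rintro ⟨i, j⟩ hij hne
    rw [HasAntidiagonal.mem_antidiagonal] at hij
    rw [if_neg (by rintro rfl; simp_all), zero_mul]

lemma Zpar_succ (n : ℕ) :
    Zpar P Q (n + 1) = Q * ∑ ij ∈ antidiagonal n, Zpar Q P ij.1 * Zpar P Q ij.2 := by
  simp_rw [Zpar_eq_sum_trees, sum_treesOfNumNodesEq_succ, parityWeight_zero_dyckPath_node,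
    sum_mul_sum, mul_sum, mul_assoc]

end Recurrences

lemma PowerSeries.mk_eq_one_add_X_mul {R : Type*} [Semiring R] {a : ℕ → R} {F : R⟦X⟧}
    (h0 : a 0 = 1) (hsucc : ∀ n, a (n + 1) = coeff n F) : mk a = 1 + X * F := by
  ext (_ | n) <;> simp [h0, hsucc, coeff_succ_X_mul]

lemma PowerSeries.eq_of_mul_one_sub_X_mul_eq_one {R : Type*} [CommRing R] {f g a b : R⟦X⟧}
    (hf : f * (1 - X * a - X * b * f) = 1) (hg : g * (1 - X * a - X * b * g) = 1) : f = g := by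
  have hunit : IsUnit (1 - X * a - X * b * (f + g)) := by
    simp [isUnit_iff_constantCoeff]
  have hprod : (f - g) * (1 - X * a - X * b * (f + g)) = 0 := by
    linear_combination hf - hg
  exact sub_eq_zero.1 (hunit.mul_left_eq_zero.1 hprod)

section GeneratingFunctions

variable {R : Type*} [CommRing R] (P Q : R)

lemma mk_Zhat : (mk (Zhat P Q) : R⟦X⟧) =
    1 + X * (C (Q - P) * mk (Zhat P Q) + C P * (mk (Zhat P Q) * mk (Zhat P Q))) :=
  mk_eq_one_add_X_mul (Zhat_zero P Q) fun n => by
    rw [map_add, coeff_C_mul, coeff_C_mul, coeff_mul, coeff_mk, Zhat_succ]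
    simp only [coeff_mk]

lemma mk_Zpar : (mk (Zpar P Q) : R⟦X⟧) = 1 + X * (C Q * (mk (Zpar Q P) * mk (Zpar P Q))) :=
  mk_eq_one_add_X_mul (Zpar_zero P Q) fun n => by
    rw [coeff_C_mul, coeff_mul, Zpar_succ]
    simp only [coeff_mk]

lemma mk_Zhat_mul :
    (mk (Zhat P Q) : R⟦X⟧) * (1 - X * C (Q - P) - X * C P * mk (Zhat P Q)) = 1 := by
  linear_combination mk_Zhat P Q

lemma mk_Zpar_mul :
    (mk (Zpar P Q) : R⟦X⟧) * (1 - X * C (Q - P) - X * C P * mk (Zpar P Q)) = 1 := by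
  rw [map_sub]
  linear_combination (1 - X * C P * mk (Zpar P Q)) * mk_Zpar P Q +
    (mk (Zpar P Q) * (X * C Q)) * mk_Zpar Q P

end GeneratingFunctions

/-- `Ẑ_n(P,Q) = Z_n(P,Q)` for all `n ≥ 0`; both generating
functions coincide and satisfy `Z·(1 - z(Q-P) - zP·Z) = 1` with `Z(0) = 1`. -/
theorem stmt10 {R : Type*} [CommRing R] (P Q : R) :
    (∀ n : ℕ, Zhat P Q n = Zpar P Q n) ∧
    (PowerSeries.mk (Zhat P Q)) *
        (1 - X * C (Q - P) - X * C P * (PowerSeries.mk (Zhat P Q))) = 1 ∧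
    constantCoeff (PowerSeries.mk (Zhat P Q)) = 1 := by
  have hZ : mk (Zhat P Q) = mk (Zpar P Q) :=
    eq_of_mul_one_sub_X_mul_eq_one (mk_Zhat_mul P Q) (mk_Zpar_mul P Q)
  refine ⟨fun n => ?_, mk_Zhat_mul P Q, by simp⟩
  rw [← coeff_mk n (Zhat P Q), hZ, coeff_mk]
end

section
/- Let J(z) be the depth-α continued fraction with indeterminate coefficients Y_1,…,Y_{2α−1} and J̃(z) the one with dual coefficients Ỹ_{2i−1} = 1/Y_{2i−1}, Ỹ_{2i} = Y_{2i}/(Y_{2i−1}Y_{2i+1}). Then, as rational functions of z, J̃(z) = −(Y_1/z)·J(1/z), and Y_1 = −1/lim_{z→∞} z·J(z). -/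
/-!
Replacing `z` by `1/z` and `Y` by the dual coefficients, one level of the continued fraction
transforms as follows: if the tail below level `s` (for odd `s`) satisfies
`J̃_{s+2} = -(Y_{s+2}/z) A`, then
`1 - z Ỹ_s - z Ỹ_{s+1} J̃_{s+2} = (Y_s - z + Y_{s+1} A) / Y_s` and
`1 - Y_s/z - Y_{s+1} A/z = -(Y_s - z + Y_{s+1} A) / z`,
so the two levels again differ by the factor `-Y_s/z`. Induction from the bottom gives the
first identity. For the second, `X⁻¹ J(1/X) = -J̃(X)/Y₁`, and any continued fraction in `X`
is a quotient of polynomials with constant terms `1`, hence takes the value `1` at `0`.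
-/

/-- `cfAux z Y n s = 1/(1 - z Y_s - z Y_{s+1}/(1 - z Y_{s+2} - ⋯ /(1 - z Y_{s+2n})))`. -/
def cfAux {K : Type*} [CommRing K] [Inv K] (z : K) (Y : ℕ → K) : ℕ → ℕ → K
  | 0, s => (1 - z * Y s)⁻¹
  | n + 1, s => (1 - z * Y s - z * Y (s + 1) * cfAux z Y n (s + 2))⁻¹

open Polynomial

universe u

lemma inv_div_eq_neg_div_mul_inv_neg_div {K : Type*} [Field K] (x E : K) {w : K} (hw : w ≠ 0) :
    (E / x)⁻¹ = -(x / w) * (-E / w)⁻¹ := by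
  rw [inv_div, inv_div, div_neg, neg_mul_neg, div_mul_div_comm, mul_comm x w,
    mul_div_mul_left _ _ hw]

theorem cfAux_dual {K : Type*} [Field K] {z : K} (hz : z ≠ 0) {c ct : ℕ → K}
    (hc : ∀ i, Odd i → c i ≠ 0)
    (hodd : ∀ i, Odd i → ct i = (c i)⁻¹)
    (heven : ∀ i, Even i → ct i = c i / (c (i - 1) * c (i + 1))) (n : ℕ) {s : ℕ} (hs : Odd s) :
    cfAux z ct n s = -(c s / z) * cfAux z⁻¹ c n s := by
  induction n generalizing s with
  | zero =>
    have hlevel : 1 - z * ct s = (c s - z) / c s := by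
      rw [hodd s hs]; field_simp [hc s hs]
    have hlevel_inv : 1 - z⁻¹ * c s = -(c s - z) / z := by
      field_simp; ring
    rw [cfAux, cfAux, hlevel, hlevel_inv]
    exact inv_div_eq_neg_div_mul_inv_neg_div _ _ hz
  | succ n ih =>
    have hs2 : Odd (s + 2) := hs.add_even even_two
    rw [cfAux, cfAux, ih hs2]
    set A := cfAux z⁻¹ c n (s + 2)
    have hlevel : 1 - z * ct s - z * ct (s + 1) * (-(c (s + 2) / z) * A) =
        (c s - z + c (s + 1) * A) / c s := by
      rw [hodd s hs, heven (s + 1) (hs.add_odd odd_one), Nat.add_sub_cancel]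
      field_simp [hc s hs, hc (s + 2) hs2]
      ring
    have hlevel_inv : 1 - z⁻¹ * c s - z⁻¹ * c (s + 1) * A = -(c s - z + c (s + 1) * A) / z := by
      field_simp; ring
    rw [hlevel, hlevel_inv]
    exact inv_div_eq_neg_div_mul_inv_neg_div _ _ hz

theorem RatFunc.eval_algebraMap_div_algebraMap {K L : Type u} [Field K] [Field L] (f : K →+* L)
    {a : L} (p q : K[X]) (hq : q.eval₂ f a ≠ 0) :
    RatFunc.eval f a (algebraMap K[X] (RatFunc K) p / algebraMap K[X] (RatFunc K) q) =
      p.eval₂ f a / q.eval₂ f a := by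
  have hq0 : q ≠ 0 := by rintro rfl; simp at hq
  have hdenom : (RatFunc.denom (algebraMap K[X] (RatFunc K) p /
      algebraMap K[X] (RatFunc K) q)).eval₂ f a ≠ 0 := fun h =>
    hq (eval₂_eq_zero_of_dvd_of_eval₂_eq_zero f a (RatFunc.denom_div_dvd p q) h)
  have hmul := congrArg (RatFunc.eval f a)
    (div_mul_cancel₀ (algebraMap K[X] (RatFunc K) p) (RatFunc.algebraMap_ne_zero hq0))
  rw [RatFunc.eval_mul f a hdenom (by simp [RatFunc.denom_algebraMap])] at hmul
  simp only [RatFunc.eval_algebraMap, Algebra.algebraMap_self, RingHom.id_apply] at hmul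
  exact eq_div_of_mul_eq hq hmul

theorem cfAux_X_eq_div {F : Type*} [Field F] (c : ℕ → F) (n s : ℕ) :
    ∃ p q : F[X], p.eval 0 = 1 ∧ q.eval 0 = 1 ∧
      cfAux (RatFunc.X : RatFunc F) (fun i => RatFunc.C (c i)) n s =
        algebraMap F[X] (RatFunc F) p / algebraMap F[X] (RatFunc F) q := by
  induction n generalizing s with
  | zero =>
    refine ⟨1, 1 - X * C (c s), by simp, by simp, ?_⟩
    rw [cfAux, map_one, one_div, map_sub, map_one, map_mul, RatFunc.algebraMap_X,
      RatFunc.algebraMap_C]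
  | succ n ih =>
    obtain ⟨p, q, hp, hq, h⟩ := ih (s + 2)
    have hq0 : algebraMap F[X] (RatFunc F) q ≠ 0 :=
      RatFunc.algebraMap_ne_zero (by rintro rfl; simp at hq)
    refine ⟨q, q - X * C (c s) * q - X * C (c (s + 1)) * p, hq, by simp [hq], ?_⟩
    rw [cfAux, h, ← inv_div]
    simp only [map_sub, map_mul, RatFunc.algebraMap_X, RatFunc.algebraMap_C]
    field_simp

theorem eval_zero_cfAux_X {F : Type*} [Field F] (c : ℕ → F) (n s : ℕ) :
    RatFunc.eval (RingHom.id F) 0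
      (cfAux (RatFunc.X : RatFunc F) (fun i => RatFunc.C (c i)) n s) = 1 := by
  obtain ⟨p, q, hp, hq, h⟩ := cfAux_X_eq_div c n s
  rw [h, RatFunc.eval_algebraMap_div_algebraMap _ _ _ (by rw [← eval, hq]; exact one_ne_zero)]
  rw [← eval, ← eval, hp, hq, div_one]

theorem stmt18_general {F : Type*} [Field F] (Y : ℕ → F) (hY : ∀ i, Y i ≠ 0)
    (α : ℕ)
    (Yt : ℕ → F)
    (hYt : Yt = fun i => if Odd i then (Y i)⁻¹ else Y i / (Y (i - 1) * Y (i + 1)))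
    (Jt Jinv : RatFunc F)
    (hJt : Jt = cfAux (RatFunc.X : RatFunc F) (fun i => RatFunc.C (Yt i)) (α - 1) 1)
    (hJinv : Jinv = cfAux ((RatFunc.X : RatFunc F)⁻¹) (fun i => RatFunc.C (Y i)) (α - 1) 1) :
    Jt = -(RatFunc.C (Y 1) / RatFunc.X) * Jinv ∧
    Y 1 = -(RatFunc.eval (RingHom.id F) 0 (RatFunc.X⁻¹ * Jinv))⁻¹ := by
  have hdual : Jt = -(RatFunc.C (Y 1) / RatFunc.X) * Jinv := by
    rw [hJt, hJinv]
    refine cfAux_dual (c := fun i => RatFunc.C (Y i)) RatFunc.X_ne_zero ?_ ?_ ?_ (α - 1) odd_one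
    · exact fun i _ => by simpa using hY i
    · exact fun i hi => by simp [hYt, hi]
    · exact fun i hi => by simp [hYt, Nat.not_odd_iff_even.mpr hi]
  refine ⟨hdual, ?_⟩
  have hJinv' : RatFunc.X⁻¹ * Jinv = RatFunc.C (-(Y 1)⁻¹) * Jt := by
    rw [hdual, map_neg, map_inv₀]
    field_simp [show RatFunc.C (Y 1) ≠ 0 by simpa using hY 1]
  have hJt_eval : RatFunc.eval (RingHom.id F) 0 Jt = 1 := hJt ▸ eval_zero_cfAux_X Yt _ _
  rw [hJinv', RatFunc.eval_mul _ _ (by rw [RatFunc.denom_C]; simp)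
    (RatFunc.eval₂_denom_ne_zero (hJt_eval ▸ one_ne_zero)), RatFunc.eval_C, hJt_eval]
  simp

/-- as rational functions of `z`, the dual depth-`α` continued
fraction satisfies `J̃(z) = −(Y₁/z)·J(1/z)`, and
`Y₁ = −1/lim_{z→∞} z·J(z)`, the limit being the value at `0` of the rational
function `w ↦ (1/w)·J(1/w)`. -/
theorem stmt18 {F : Type*} [Field F] (Y : ℕ → F) (hY : ∀ i, Y i ≠ 0)
    (α : ℕ) (hα : 1 ≤ α)
    (Yt : ℕ → F)
    (hYt : Yt = fun i => if Odd i then (Y i)⁻¹ else Y i / (Y (i - 1) * Y (i + 1)))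
    (J Jt Jinv : RatFunc F)
    (hJ : J = cfAux (RatFunc.X : RatFunc F) (fun i => RatFunc.C (Y i)) (α - 1) 1)
    (hJt : Jt = cfAux (RatFunc.X : RatFunc F) (fun i => RatFunc.C (Yt i)) (α - 1) 1)
    (hJinv : Jinv = cfAux ((RatFunc.X : RatFunc F)⁻¹) (fun i => RatFunc.C (Y i)) (α - 1) 1) :
    Jt = -(RatFunc.C (Y 1) / RatFunc.X) * Jinv ∧
    Y 1 = -(RatFunc.eval (RingHom.id F) 0 (RatFunc.X⁻¹ * Jinv))⁻¹ :=
  stmt18_general Y hY α Yt hYt Jt Jinv hJt hJinv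
end
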